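/- arXiv:1905.08316 — 3 statements merged into one kernel-verified Lean document; each statement's English description precedes it below -/
import Mathlib

section
/- Let $W = S_{n+1}$ with simple transpositions $s_1,\dots,s_n$. The number of covering relations of degree 2 in the two-sided weak order — i.e. the number of pairs $(x,y)$ such that there exist simple transpositions $s_i, s_j$ with $y = s_i x = x s_j$ and $\ell(y) = \ell(x) + 1$ — equals $n \cdot n!$. -/
/-- The number of inversions of a permutation, i.e. its Coxeter length. -/
noncomputable def invLen {N : ℕ} (x : Equiv.Perm (Fin N)) : ℕ :=
  Nat.card {p : Fin N × Fin N // p.1 < p.2 ∧ x p.2 < x p.1}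

/-- The simple transposition `s i = (i, i+1)` in `S_{n+1}`. -/
def simpleT {n : ℕ} (i : Fin n) : Equiv.Perm (Fin (n + 1)) :=
  Equiv.swap i.castSucc i.succ

def invFinset {N : ℕ} (x : Equiv.Perm (Fin N)) : Finset (Fin N × Fin N) :=
  Finset.univ.filter fun p => p.1 < p.2 ∧ x p.2 < x p.1

lemma invLen_eq_card {N : ℕ} (x : Equiv.Perm (Fin N)) : invLen x = (invFinset x).card := by
  rw [invLen, Nat.card_eq_fintype_card, Fintype.card_subtype, invFinset]

lemma simpleT_apply_val {n : ℕ} (i : Fin n) (u : Fin (n+1)) :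
    ((simpleT i u : Fin (n+1)) : ℕ) =
      if (u:ℕ) = (i:ℕ) then (i:ℕ)+1 else if (u:ℕ) = (i:ℕ)+1 then (i:ℕ) else (u:ℕ) := by
  rw [simpleT, Equiv.swap_apply_def]
  split_ifs with h1 h2 h3 h4 <;> simp_all [Fin.ext_iff]

lemma invFinset_simpleT_mul {n : ℕ} (i : Fin n) (x : Equiv.Perm (Fin (n+1))) :
    invFinset (simpleT i * x) =
      if x⁻¹ i.castSucc < x⁻¹ i.succ
      then insert (x⁻¹ i.castSucc, x⁻¹ i.succ) (invFinset x)
      else (invFinset x).erase (x⁻¹ i.succ, x⁻¹ i.castSucc) := by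
  have key : ∀ p : Fin (n+1), ((x p : ℕ) = (i : ℕ) ↔ p = x⁻¹ i.castSucc)
      ∧ ((x p : ℕ) = (i : ℕ)+1 ↔ p = x⁻¹ i.succ) := by
    intro p
    rw [Equiv.Perm.eq_inv_iff_eq, Equiv.Perm.eq_inv_iff_eq, Fin.ext_iff (b := Fin.castSucc i),
      Fin.ext_iff (b := Fin.succ i)]
    simp
  split_ifs with hab
  · ext p
    obtain ⟨p1, p2⟩ := p
    simp only [invFinset, Finset.mem_insert, Finset.mem_filter, Finset.mem_univ, true_and,
      Prod.mk.injEq]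
    simp only [Equiv.Perm.mul_apply]
    rw [Fin.lt_def, Fin.lt_def (a := x p2), Fin.lt_def (a := simpleT i (x p2)),
      Fin.ext_iff (a := p1), Fin.ext_iff (a := p2)]
    rw [simpleT_apply_val, simpleT_apply_val]
    have h1 := (key p1).1
    have h2 := (key p1).2
    have h3 := (key p2).1
    have h4 := (key p2).2
    have h5 : (x p1 : ℕ) = (x p2 : ℕ) ↔ (p1 : ℕ) = (p2 : ℕ) := by
      rw [← Fin.ext_iff, ← Fin.ext_iff]
      exact ⟨fun h => x.injective h, fun h => by rw [h]⟩
    rw [Fin.ext_iff] at h1 h2 h3 h4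
    rw [Fin.lt_def] at hab
    split_ifs <;> omega
  · ext p
    obtain ⟨p1, p2⟩ := p
    simp only [invFinset, Finset.mem_erase, Finset.mem_filter, Finset.mem_univ, true_and,
      Prod.mk.injEq, ne_eq, not_and]
    simp only [Equiv.Perm.mul_apply]
    rw [Fin.lt_def, Fin.lt_def (a := x p2), Fin.lt_def (a := simpleT i (x p2)),
      Fin.ext_iff (a := p1), Fin.ext_iff (a := p2)]
    rw [simpleT_apply_val, simpleT_apply_val]
    have h1 := (key p1).1
    have h2 := (key p1).2
    have h3 := (key p2).1
    have h4 := (key p2).2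
    have h5 : (x p1 : ℕ) = (x p2 : ℕ) ↔ (p1 : ℕ) = (p2 : ℕ) := by
      rw [← Fin.ext_iff, ← Fin.ext_iff]
      exact ⟨fun h => x.injective h, fun h => by rw [h]⟩
    have hab' : ¬ ((x⁻¹ i.castSucc : ℕ) < (x⁻¹ i.succ : ℕ)) := by
      rw [← Fin.lt_def]; exact hab
    have hne : (x⁻¹ i.castSucc : Fin (n+1)) ≠ x⁻¹ i.succ := by
      intro h
      have := x⁻¹.injective.ne (a₁ := i.castSucc) (a₂ := i.succ) (Fin.castSucc_lt_succ (i := i)).ne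
      exact this h
    rw [Fin.ext_iff] at h1 h2 h3 h4
    rw [ne_eq, Fin.ext_iff] at hne
    split_ifs <;> omega

lemma invLen_simpleT_mul_eq_iff {n : ℕ} (i : Fin n) (x : Equiv.Perm (Fin (n+1))) :
    invLen (simpleT i * x) = invLen x + 1 ↔ x⁻¹ i.castSucc < x⁻¹ i.succ := by
  rw [invLen_eq_card, invLen_eq_card, invFinset_simpleT_mul]
  split_ifs with hab
  · rw [iff_true_intro hab, iff_true, Finset.card_insert_of_notMem]
    simp only [invFinset, Finset.mem_filter, Finset.mem_univ, true_and, not_and]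
    intro _
    simp only [Equiv.Perm.inv_def, Equiv.apply_symm_apply]
    exact (Fin.castSucc_lt_succ (i := i)).not_gt
  · have hmem : (x⁻¹ i.succ, x⁻¹ i.castSucc) ∈ invFinset x := by
      simp only [invFinset, Finset.mem_filter, Finset.mem_univ, true_and,
        Equiv.Perm.inv_def, Equiv.apply_symm_apply]
      refine ⟨?_, Fin.castSucc_lt_succ (i := i)⟩
      rcases lt_or_eq_of_le (not_lt.mp hab) with h | h
      · exact h
      · exact absurd (x⁻¹.injective h) (Fin.castSucc_lt_succ (i := i)).ne'
    rw [Finset.card_erase_of_mem hmem, iff_false_intro hab, iff_false]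
    have := Finset.card_pos.mpr ⟨_, hmem⟩
    omega

lemma swap_inv_conj {n : ℕ} (i : Fin n) (x : Equiv.Perm (Fin (n+1))) :
    Equiv.swap (x⁻¹ i.castSucc) (x⁻¹ i.succ) = x⁻¹ * simpleT i * x := by
  rw [simpleT, Equiv.swap_apply_apply, inv_inv]

lemma cond_iff {n : ℕ} (x y : Equiv.Perm (Fin (n+1))) :
    (∃ i j : Fin n, y = simpleT i * x ∧ y = x * simpleT j ∧ invLen y = invLen x + 1)
    ↔ ∃ i : Fin n, ((x⁻¹ i.succ : Fin (n+1)) : ℕ) = ((x⁻¹ i.castSucc : Fin (n+1)) : ℕ) + 1 ∧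
        y = simpleT i * x := by
  constructor
  · rintro ⟨i, j, h1, h2, h3⟩
    refine ⟨i, ?_, h1⟩
    rw [h1] at h3
    have hab : x⁻¹ i.castSucc < x⁻¹ i.succ := (invLen_simpleT_mul_eq_iff i x).mp h3
    have hconj : Equiv.swap (x⁻¹ i.castSucc) (x⁻¹ i.succ) = simpleT j := by
      rw [swap_inv_conj, mul_assoc, h1.symm.trans h2, inv_mul_cancel_left]
    have happ := congrArg (fun σ : Equiv.Perm (Fin (n+1)) => σ j.castSucc) hconj
    simp only [simpleT, Equiv.swap_apply_left] at happ
    rcases eq_or_ne (j.castSucc) (x⁻¹ i.castSucc) with h | h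
    · rw [h, Equiv.swap_apply_left] at happ
      rw [happ, ← h]
      simp
    · rcases eq_or_ne (j.castSucc) (x⁻¹ i.succ) with h' | h'
      · rw [h', Equiv.swap_apply_right] at happ
        exfalso
        rw [Fin.lt_def, happ, ← h'] at hab
        simp at hab
      · rw [Equiv.swap_apply_of_ne_of_ne h h'] at happ
        exfalso
        have := congrArg Fin.val happ
        simp at this
  · rintro ⟨i, hv, hy⟩
    have hlt : (x⁻¹ i.castSucc : ℕ) < n := by
      have := (x⁻¹ i.succ).isLt
      omega
    refine ⟨i, ⟨(x⁻¹ i.castSucc : ℕ), hlt⟩, hy, ?_, ?_⟩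
    · have hcs : Fin.castSucc (⟨(x⁻¹ i.castSucc : ℕ), hlt⟩ : Fin n) = x⁻¹ i.castSucc :=
        Fin.ext rfl
      have hsc : Fin.succ (⟨(x⁻¹ i.castSucc : ℕ), hlt⟩ : Fin n) = x⁻¹ i.succ :=
        Fin.ext (by rw [Fin.val_succ]; exact hv.symm)
      have : simpleT (⟨(x⁻¹ i.castSucc : ℕ), hlt⟩ : Fin n) = x⁻¹ * simpleT i * x := by
        rw [simpleT, hcs, hsc, swap_inv_conj]
      rw [hy, this]
      group
    · rw [hy, invLen_simpleT_mul_eq_iff, Fin.lt_def]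
      omega

lemma simpleT_injective {n : ℕ} : Function.Injective (simpleT (n := n)) := by
  intro i i' h
  have h2 := congrArg (fun σ : Equiv.Perm (Fin (n+1)) => ((σ i.castSucc : Fin (n+1)) : ℕ)) h
  simp only [simpleT_apply_val, Fin.coe_castSucc] at h2
  apply Fin.ext
  split_ifs at h2 <;> omega

lemma exists_sigma {m : ℕ} (i : Fin (m+1)) :
    ∃ σ : Equiv.Perm (Fin (m+2)), σ 0 = i.castSucc ∧ σ 1 = i.succ := by
  set τ := Equiv.swap (0 : Fin (m+2)) i.castSucc with hτ
  have hτ0 : τ 0 = i.castSucc := Equiv.swap_apply_left _ _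
  refine ⟨Equiv.swap (τ 1) i.succ * τ, ?_, ?_⟩
  · show Equiv.swap (τ 1) i.succ (τ 0) = _
    rw [hτ0]
    apply Equiv.swap_apply_of_ne_of_ne
    · by_cases h : (1 : Fin (m+2)) = i.castSucc
      · rw [hτ, h, Equiv.swap_apply_right]
        rw [← h]
        exact one_ne_zero
      · rw [hτ, Equiv.swap_apply_of_ne_of_ne one_ne_zero h]
        exact (Ne.symm h)
    · exact (Fin.castSucc_lt_succ (i := i)).ne
  · show Equiv.swap (τ 1) i.succ (τ 1) = _
    exact Equiv.swap_apply_left _ _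

lemma card_fiber {n : ℕ} (i : Fin n) :
    Nat.card {x : Equiv.Perm (Fin (n+1)) //
      ((x⁻¹ i.succ : Fin (n+1)) : ℕ) = ((x⁻¹ i.castSucc : Fin (n+1)) : ℕ) + 1}
      = Nat.factorial n := by
  classical
  obtain ⟨m, rfl⟩ : ∃ m, n = m + 1 := ⟨n - 1, by have := i.pos; omega⟩
  obtain ⟨σ, hσ0, hσ1⟩ := exists_sigma i
  have e1 : {x : Equiv.Perm (Fin (m+2)) //
        ((x⁻¹ i.succ : Fin (m+2)) : ℕ) = ((x⁻¹ i.castSucc : Fin (m+2)) : ℕ) + 1} ≃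
      {y : Equiv.Perm (Fin (m+2)) //
        ((y i.succ : Fin (m+2)) : ℕ) = ((y i.castSucc : Fin (m+2)) : ℕ) + 1} :=
    (Equiv.inv (Equiv.Perm (Fin (m+2)))).subtypeEquiv (fun x => Iff.rfl)
  have e2 : {y : Equiv.Perm (Fin (m+2)) //
        ((y i.succ : Fin (m+2)) : ℕ) = ((y i.castSucc : Fin (m+2)) : ℕ) + 1} ≃
      {z : Equiv.Perm (Fin (m+2)) // ((z 1 : Fin (m+2)) : ℕ) = ((z 0 : Fin (m+2)) : ℕ) + 1} :=
    (Equiv.mulRight σ).subtypeEquiv (fun y => by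
      simp only [Equiv.coe_mulRight, Equiv.Perm.mul_apply, hσ0, hσ1])
  have e3 : {z : Equiv.Perm (Fin (m+2)) // ((z 1 : Fin (m+2)) : ℕ) = ((z 0 : Fin (m+2)) : ℕ) + 1} ≃
      {q : Fin (m+2) × Equiv.Perm (Fin (m+1)) // q.1 = ((q.2 0).castSucc : Fin (m+2))} := by
    refine ((Equiv.Perm.decomposeFin.symm.subtypeEquiv (fun q => ?_)).symm)
    obtain ⟨a, e⟩ := q
    rw [Equiv.Perm.decomposeFin_symm_apply_one, Equiv.Perm.decomposeFin_symm_apply_zero]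
    by_cases hwa : ((e 0).succ : Fin (m+2)) = a
    · rw [hwa, Equiv.swap_apply_right]
      have := congrArg Fin.val hwa
      simp only [Fin.val_succ] at this
      simp only [Fin.ext_iff, Fin.coe_castSucc, Fin.val_zero]
      omega
    · rw [Equiv.swap_apply_of_ne_of_ne (Fin.succ_ne_zero _) hwa]
      simp [Fin.ext_iff]
      omega
  have e4 : {q : Fin (m+2) × Equiv.Perm (Fin (m+1)) // q.1 = ((q.2 0).castSucc : Fin (m+2))} ≃
      Equiv.Perm (Fin (m+1)) :=
    { toFun := fun q => q.1.2
      invFun := fun e => ⟨((e 0).castSucc, e), rfl⟩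
      left_inv := fun q => by
        obtain ⟨⟨a, e⟩, h⟩ := q
        simp only at h
        subst h
        rfl
      right_inv := fun e => rfl }
  rw [Nat.card_congr (((e1.trans e2).trans e3).trans e4), Nat.card_eq_fintype_card,
    Fintype.card_perm, Fintype.card_fin]

/-- The number of covering relations of degree 2 in the two-sided weak order on `S_{n+1}`
is `n · n!`. -/
theorem degree_two_covers_two_sided_weak_order (n : ℕ) :
    Nat.card {p : Equiv.Perm (Fin (n + 1)) × Equiv.Perm (Fin (n + 1)) //
      ∃ i j : Fin n, p.2 = simpleT i * p.1 ∧ p.2 = p.1 * simpleT j ∧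
        invLen p.2 = invLen p.1 + 1} = n * Nat.factorial n := by
  classical
  have ecard : Nat.card {p : Equiv.Perm (Fin (n + 1)) × Equiv.Perm (Fin (n + 1)) //
      ∃ i j : Fin n, p.2 = simpleT i * p.1 ∧ p.2 = p.1 * simpleT j ∧
        invLen p.2 = invLen p.1 + 1} =
      Nat.card {q : Fin n × Equiv.Perm (Fin (n+1)) //
        ((q.2⁻¹ q.1.succ : Fin (n+1)) : ℕ) = ((q.2⁻¹ q.1.castSucc : Fin (n+1)) : ℕ) + 1} := by
    refine Nat.card_congr (Equiv.symm (Equiv.ofBijective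
      (fun q => ⟨(q.1.2, simpleT q.1.1 * q.1.2), (cond_iff q.1.2 _).mpr ⟨q.1.1, q.2, rfl⟩⟩)
      ⟨?_, ?_⟩))
    · rintro ⟨⟨i, x⟩, hq⟩ ⟨⟨i', x'⟩, hq'⟩ h
      rw [Subtype.mk.injEq, Prod.mk.injEq] at h
      obtain ⟨hx, hs⟩ := h
      subst hx
      have : simpleT i = simpleT i' := mul_right_cancel hs
      have : i = i' := simpleT_injective this
      subst this
      rfl
    · rintro ⟨⟨x, y⟩, h⟩
      obtain ⟨i, hP, hy⟩ := (cond_iff x y).mp h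
      exact ⟨⟨(i, x), hP⟩, Subtype.ext (Prod.ext rfl hy.symm)⟩
  rw [ecard,
    Nat.card_congr (Equiv.subtypeProdEquivSigmaSubtype
      (fun (i : Fin n) (x : Equiv.Perm (Fin (n+1))) =>
        ((x⁻¹ i.succ : Fin (n+1)) : ℕ) = ((x⁻¹ i.castSucc : Fin (n+1)) : ℕ) + 1)),
    Nat.card_eq_fintype_card, Fintype.card_sigma]
  have hsum : ∀ i : Fin n, Fintype.card {x : Equiv.Perm (Fin (n+1)) //
      ((x⁻¹ i.succ : Fin (n+1)) : ℕ) = ((x⁻¹ i.castSucc : Fin (n+1)) : ℕ) + 1} =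
      Nat.factorial n := fun i => by
    rw [← Nat.card_eq_fintype_card]
    exact card_fiber i
  rw [Finset.sum_congr rfl (fun i _ => hsum i), Finset.sum_const, Finset.card_univ,
    Fintype.card_fin, smul_eq_mul]
end

section
/- Let $(W,S)$ be a Coxeter system, $I, J \subseteq S$, and $w$ a minimal-length representative of the double coset $W_I w W_J$. Set $H = I \cap w J w^{-1}$ (viewed as a subset of reflections generating $W_H = W_I \cap w W_J w^{-1}$). Then every element of $W_I w W_J$ has a unique expression of the form $uwv$ where $u \in W_I$ is a minimal-length coset representative of $W_I / W_H$, $v \in W_J$, and $\ell(uwv) = \ell(u) + \ell(w) + \ell(v)$. -/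
open List

namespace CoxHelper

attribute [local instance] Classical.propDecidable

variable {B W : Type*} [Group W] {M : CoxeterMatrix B} (cs : CoxeterSystem M W)

local prefix:100 "s" => cs.simple
local prefix:100 "π" => cs.wordProd
local prefix:100 "ℓ" => cs.length

theorem exists_reduced_word' (w : W) : ∃ ω : List B, ω.length = ℓ w ∧ w = π ω := by
  obtain ⟨ω, h1, h2⟩ := cs.exists_isReduced w
  exact ⟨ω, by rw [h2]; exact h1.symm, h2⟩

theorem conj_simple_eq_simple_iff (i : B) {t : W} : (s i * t * s i = s i) ↔ (t = s i) := by
  constructor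
  · intro h
    have := congrArg (fun y => s i * y * s i) h
    simpa [mul_assoc, cs.simple_mul_simple_cancel_left,
      cs.simple_mul_simple_self] using this
  · intro h; rw [h, cs.simple_mul_simple_self, one_mul]

noncomputable def pfun (i : B) : W × ZMod 2 → W × ZMod 2 :=
  fun x => (s i * x.1 * s i, x.2 + if x.1 = s i then 1 else 0)

theorem pfun_involutive (i : B) : Function.Involutive (pfun cs i) := by
  rintro ⟨t, e⟩
  simp only [pfun, conj_simple_eq_simple_iff cs i]
  rw [Prod.mk.injEq]
  constructor
  · simp [mul_assoc, cs.simple_mul_simple_cancel_left, cs.simple_mul_simple_self,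
      ← mul_assoc, cs.simple_mul_simple_cancel_right]
  · by_cases h : t = s i <;> simp [h, add_assoc]
    decide

noncomputable def pperm (i : B) : Equiv.Perm (W × ZMod 2) :=
  (pfun_involutive cs i).toPerm

theorem pperm_apply (i : B) (x : W × ZMod 2) :
    pperm cs i x = (s i * x.1 * s i, x.2 + if x.1 = s i then 1 else 0) := rfl

theorem hom_aux {G : Type*} [Group G] {a b : G} (h : a * b = b⁻¹ * a) (n : ℕ) :
    a * b ^ n = (b ^ n)⁻¹ * a := by
  induction n with
  | zero => simp
  | succ n ih =>
    rw [pow_succ, ← mul_assoc, ih, mul_assoc, h]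
    group

theorem hom_aux2 {G : Type*} [Group G] {a b : G} (h : a * b = b⁻¹ * a) (n : ℕ) :
    b⁻¹ * (a * b ^ n) * b = a * b ^ (n + 2) := by
  rw [hom_aux h n, hom_aux h (n + 2), mul_assoc, mul_assoc, h]
  group

theorem simple_base (i j : B) : s j * (s i * s j) = (s i * s j)⁻¹ * s j := by
  rw [mul_inv_rev, cs.inv_simple, cs.inv_simple, ← mul_assoc]

theorem simple_mul_pow (i j : B) (n : ℕ) :
    s j * (s i * s j) ^ n = ((s i * s j) ^ n)⁻¹ * s j :=
  hom_aux (simple_base cs i j) n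

theorem cond_shift (i j : B) (n : ℕ) (t : W) :
    ((s i * s j) * t * (s i * s j)⁻¹ = s j * (s i * s j) ^ n)
      ↔ t = s j * (s i * s j) ^ (n + 2) := by
  have key : (s i * s j)⁻¹ * (s j * (s i * s j) ^ n) * (s i * s j)
      = s j * (s i * s j) ^ (n + 2) := hom_aux2 (simple_base cs i j) n
  constructor
  · intro h
    have ht : t = (s i * s j)⁻¹ * ((s i * s j) * t * (s i * s j)⁻¹) * (s i * s j) := by group
    rw [ht, h, key]
  · intro h
    rw [h, ← key]
    group

theorem pperm_mul_pow_apply (i j : B) (k : ℕ) : ∀ x : W × ZMod 2,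
    ((pperm cs i * pperm cs j) ^ k) x =
      ((s i * s j) ^ k * x.1 * ((s i * s j) ^ k)⁻¹,
        x.2 + ∑ n ∈ Finset.range (2 * k),
          if x.1 = s j * (s i * s j) ^ n then (1 : ZMod 2) else 0) := by
  induction k with
  | zero => simp
  | succ k ih =>
    intro x
    rw [pow_succ, Equiv.Perm.mul_apply, Equiv.Perm.mul_apply, pperm_apply, pperm_apply]
    dsimp only
    rw [ih ((s i * (s j * x.1 * s j) * s i,
      x.2 + (if x.1 = s j then (1:ZMod 2) else 0)
          + (if s j * x.1 * s j = s i then (1:ZMod 2) else 0)))]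
    dsimp only
    have hconj : s i * (s j * x.1 * s j) * s i = (s i * s j) * x.1 * (s i * s j)⁻¹ := by
      rw [mul_inv_rev, cs.inv_simple, cs.inv_simple]
      group
    rw [Prod.mk.injEq]
    constructor
    · rw [hconj, pow_succ]
      group
    · have h2 : 2 * (k + 1) = (2 * k + 1) + 1 := by ring
      rw [h2, Finset.sum_range_succ', Finset.sum_range_succ']
      have e0 : (if x.1 = s j * (s i * s j) ^ 0 then (1:ZMod 2) else 0)
          = (if x.1 = s j then (1:ZMod 2) else 0) := by
        simp
      have e1 : (if x.1 = s j * (s i * s j) ^ (0 + 1) then (1:ZMod 2) else 0)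
          = (if s j * x.1 * s j = s i then (1:ZMod 2) else 0) := by
        apply if_congr _ rfl rfl
        rw [pow_one]
        constructor
        · intro h
          rw [h]
          simp [mul_assoc, cs.simple_mul_simple_cancel_left, cs.simple_mul_simple_self,
            ← mul_assoc, cs.simple_mul_simple_cancel_right]
        · intro h
          have := congrArg (fun y => s j * y * s j) h
          simp only [mul_assoc, cs.simple_mul_simple_cancel_left] at this
          rw [← mul_assoc] at this
          simp only [cs.simple_mul_simple_cancel_right] at this
          rw [this]
      have eshift : ∀ n : ℕ,
          (if s i * (s j * x.1 * s j) * s i = s j * (s i * s j) ^ n then (1:ZMod 2) else 0)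
            = (if x.1 = s j * (s i * s j) ^ (n + 1 + 1) then (1:ZMod 2) else 0) := by
        intro n
        apply if_congr _ rfl rfl
        rw [hconj]
        exact cond_shift cs i j n x.1
      rw [Finset.sum_congr rfl (fun n _ => eshift n), e0, e1]
      ring

theorem pperm_liftable : M.IsLiftable (fun i => pperm cs i) := by
  intro i j
  ext x
  · rw [pperm_mul_pow_apply cs i j (M i j) x]
    rw [cs.simple_mul_simple_pow i j]
    simp
  · rw [pperm_mul_pow_apply cs i j (M i j) x]
    have : 2 * M i j = M i j + M i j := by ring
    rw [this, Finset.sum_range_add]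
    have : ∀ n, (if x.1 = s j * (s i * s j) ^ (M i j + n) then (1:ZMod 2) else 0)
        = (if x.1 = s j * (s i * s j) ^ n then (1:ZMod 2) else 0) := by
      intro n
      apply if_congr _ rfl rfl
      rw [add_comm, pow_add, cs.simple_mul_simple_pow i j, mul_one]
    rw [Finset.sum_congr rfl (fun n _ => this n)]
    simp [CharTwo.add_self_eq_zero]

noncomputable def prep : W →* Equiv.Perm (W × ZMod 2) :=
  cs.lift ⟨fun i => pperm cs i, pperm_liftable cs⟩

theorem prep_simple (i : B) : prep cs (s i) = pperm cs i :=
  cs.lift_apply_simple (pperm_liftable cs) i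

theorem prep_wordProd_apply (ω : List B) (x : W × ZMod 2) :
    prep cs (π ω) x = (π ω * x.1 * (π ω)⁻¹,
      x.2 + (((cs.rightInvSeq ω).count x.1 : ℕ) : ZMod 2)) := by
  induction ω generalizing x with
  | nil => simp [CoxeterSystem.rightInvSeq]
  | cons i ω ih =>
    rw [cs.wordProd_cons, map_mul, Equiv.Perm.mul_apply, ih, prep_simple, pperm_apply]
    dsimp only
    rw [Prod.mk.injEq]
    constructor
    · rw [mul_inv_rev, cs.inv_simple]
      group
    · show x.2 + _ + _ = x.2 + _
      rw [CoxeterSystem.rightInvSeq, List.count_cons]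
      have hiff : (π ω * x.1 * (π ω)⁻¹ = s i) ↔ ((((π ω)⁻¹ * s i * π ω) == x.1) = true) := by
        rw [beq_iff_eq]
        constructor
        · intro h; rw [← h]; group
        · intro h; rw [← h]; group
      push_cast
      rw [if_congr hiff rfl rfl]
      ring

theorem count_rightInvSeq_parity_eq {ω₁ ω₂ : List B} (h : π ω₁ = π ω₂) (t : W) :
    ((((cs.rightInvSeq ω₁).count t : ℕ)) : ZMod 2) = (((cs.rightInvSeq ω₂).count t : ℕ) : ZMod 2) := by
  have h1 := prep_wordProd_apply cs ω₁ (t, 0)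
  have h2 := prep_wordProd_apply cs ω₂ (t, 0)
  rw [h] at h1
  rw [h1] at h2
  have := congrArg Prod.snd h2
  simpa using this

/-- If `j` is a right descent of `π ω` and `ω` is reduced, then `s j ∈ ris ω`. -/
theorem simple_mem_rightInvSeq_of_descent {ω : List B} (hred : cs.IsReduced ω) {j : B}
    (hj : ℓ (π ω * s j) < ℓ (π ω)) : s j ∈ cs.rightInvSeq ω := by
  obtain ⟨ω₂, hlen, hprod⟩ := exists_reduced_word' cs (π ω * s j)
  have hlen' : ℓ (π ω * s j) = ℓ (π ω) - 1 := by
    rcases cs.length_mul_simple (π ω) j with h | h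
    · omega
    · omega
  have hχprod : π (ω₂ ++ [j]) = π ω := by
    rw [cs.wordProd_append, cs.wordProd_singleton, ← hprod,
      cs.simple_mul_simple_cancel_right]
  have hωpos : 0 < ℓ (π ω) := by omega
  have hχred : cs.IsReduced (ω₂ ++ [j]) := by
    unfold CoxeterSystem.IsReduced
    rw [hχprod, List.length_append, List.length_singleton, hlen, hlen']
    unfold CoxeterSystem.IsReduced at hred
    omega
  have hmem : s j ∈ cs.rightInvSeq (ω₂ ++ [j]) := by
    rw [← List.concat_eq_append, cs.rightInvSeq_concat]
    simp
  have hcount : (cs.rightInvSeq (ω₂ ++ [j])).count (s j) = 1 :=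
    List.count_eq_one_of_mem (hχred.nodup_rightInvSeq) hmem
  have hpar := count_rightInvSeq_parity_eq cs hχprod (s j)
  rw [hcount] at hpar
  have : (cs.rightInvSeq ω).count (s j) ≠ 0 := by
    intro hzero
    rw [hzero] at hpar
    simp at hpar
  have := List.count_pos_iff.mp (Nat.pos_of_ne_zero this)
  exact this

/-- Right exchange property for simple reflections. -/
theorem right_exchange {ω : List B} (hred : cs.IsReduced ω) {j : B}
    (hj : ℓ (π ω * s j) < ℓ (π ω)) :
    ∃ k < ω.length, π ω * s j = π (ω.eraseIdx k) := by
  have hmem := simple_mem_rightInvSeq_of_descent cs hred hj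
  obtain ⟨k, hk, hget⟩ := List.mem_iff_getElem.mp hmem
  rw [cs.length_rightInvSeq] at hk
  refine ⟨k, hk, ?_⟩
  have := cs.wordProd_mul_getD_rightInvSeq ω k
  rw [List.getD_eq_getElem _ 1 (by rw [cs.length_rightInvSeq]; exact hk), hget] at this
  exact this

/-- Left exchange property for simple reflections. -/
theorem left_exchange {ω : List B} (hred : cs.IsReduced ω) {i : B}
    (hi : ℓ (s i * π ω) < ℓ (π ω)) :
    ∃ k < ω.length, s i * π ω = π (ω.eraseIdx k) := by
  have hrev : cs.IsReduced ω.reverse := (cs.isReduced_reverse_iff ω).mpr hred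
  have hlen : ℓ (π ω.reverse * s i) < ℓ (π ω.reverse) := by
    rw [cs.wordProd_reverse]
    have h1 : (π ω)⁻¹ * s i = (s i * π ω)⁻¹ := by
      rw [mul_inv_rev, cs.inv_simple]
    rw [h1, cs.length_inv, cs.length_inv]
    exact hi
  have hmem := simple_mem_rightInvSeq_of_descent cs hrev hlen
  rw [cs.rightInvSeq_reverse, List.mem_reverse] at hmem
  obtain ⟨k, hk, hget⟩ := List.mem_iff_getElem.mp hmem
  rw [cs.length_leftInvSeq] at hk
  refine ⟨k, hk, ?_⟩
  have := cs.getD_leftInvSeq_mul_wordProd ω k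
  rw [List.getD_eq_getElem _ 1 (by rw [cs.length_leftInvSeq]; exact hk), hget] at this
  exact this

/-- Deletion: a non-reduced word can be shortened by two letters, keeping letters. -/
theorem deletion {ω : List B} (h : ¬ cs.IsReduced ω) :
    ∃ ω' : List B, ω'.length + 2 = ω.length ∧ π ω' = π ω ∧ ∀ i ∈ ω', i ∈ ω := by
  have hnil : cs.IsReduced ([] : List B) := by
    unfold CoxeterSystem.IsReduced
    simp
  have hωne : ω.length ≠ 0 := by
    intro h0
    rw [List.length_eq_zero_iff.mp h0] at h
    exact h hnil
  have hex : ∃ k, ¬ cs.IsReduced (ω.take (k + 1)) := by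
    refine ⟨ω.length - 1, ?_⟩
    rwa [show ω.length - 1 + 1 = ω.length by omega, List.take_length]
  classical
  set k := Nat.find hex with hkdef
  have hspec : ¬ cs.IsReduced (ω.take (k + 1)) := Nat.find_spec hex
  have hmin : ∀ m, m < k → cs.IsReduced (ω.take (m + 1)) := by
    intro m hm
    by_contra hc
    have : Nat.find hex ≤ m := Nat.find_le hc
    omega
  have htk : cs.IsReduced (ω.take k) := by
    rcases Nat.eq_zero_or_pos k with h0 | h0
    · rw [h0]; unfold CoxeterSystem.IsReduced; simp
    · have := hmin (k - 1) (by omega)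
      rwa [show k - 1 + 1 = k by omega] at this
  have hkN : k < ω.length := by
    by_contra hc
    push_neg at hc
    rw [List.take_of_length_le hc] at htk
    exact h htk
  have htake : ω.take (k + 1) = ω.take k ++ [ω[k]] := by
    rw [List.take_succ, List.getElem?_eq_getElem hkN]
    rfl
  have hlentk : ℓ (π (ω.take k)) = k := by
    have := htk
    unfold CoxeterSystem.IsReduced at this
    rw [this, List.length_take]
    omega
  have hdesc : ℓ (π (ω.take k) * s (ω[k])) < ℓ (π (ω.take k)) := by
    have hlt : ℓ (π (ω.take (k + 1))) < k + 1 := by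
      have hle := cs.length_wordProd_le (ω.take (k + 1))
      have hlen1 : (ω.take (k + 1)).length = k + 1 := by
        rw [List.length_take]; omega
      unfold CoxeterSystem.IsReduced at hspec
      rw [hlen1] at hle hspec
      omega
    rw [htake, cs.wordProd_append, cs.wordProd_singleton] at hlt
    rcases cs.length_mul_simple (π (ω.take k)) (ω[k]) with hc | hc <;> omega
  obtain ⟨m, hm, hdel⟩ := right_exchange cs htk hdesc
  refine ⟨(ω.take k).eraseIdx m ++ ω.drop (k + 1), ?_, ?_, ?_⟩
  · rw [List.length_append, List.length_eraseIdx, List.length_take, List.length_drop]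
    rw [List.length_take] at hm
    simp only [if_pos hm]
    omega
  · rw [cs.wordProd_append, ← hdel]
    have : π ω = π (ω.take (k + 1)) * π (ω.drop (k + 1)) := by
      rw [← cs.wordProd_append, List.take_append_drop]
    rw [this, htake, cs.wordProd_append, cs.wordProd_singleton]
  · intro i hi
    rcases List.mem_append.mp hi with hi | hi
    · exact (List.take_sublist k ω).subset ((List.eraseIdx_sublist _ m).subset hi)
    · exact (List.drop_sublist (k + 1) ω).subset hi

/-- Every product of a word has a reduced word using only letters of the original word
(up to set membership). -/
theorem exists_reduced_word_subset (S : Set B) {x : W}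
    (hx : ∃ ω : List B, (∀ i ∈ ω, i ∈ S) ∧ x = π ω) :
    ∃ ω : List B, (∀ i ∈ ω, i ∈ S) ∧ cs.IsReduced ω ∧ x = π ω := by
  obtain ⟨ω, hsub, rfl⟩ := hx
  generalize hn : ω.length = n
  induction n using Nat.strong_induction_on generalizing ω with
  | _ n ih =>
    by_cases hred : cs.IsReduced ω
    · exact ⟨ω, hsub, hred, rfl⟩
    · obtain ⟨ω', hlen, hprod, hmem⟩ := deletion cs hred
      subst hn
      obtain ⟨ωr, h1, h2, h3⟩ := ih ω'.length (by omega) ω'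
        (fun i hi => hsub i (hmem i hi)) rfl
      exact ⟨ωr, h1, h2, by rw [← hprod, h3]⟩

/-- Membership in the standard parabolic subgroup via words. -/
theorem mem_parabolic_iff (S : Set B) (x : W) :
    x ∈ Subgroup.closure (cs.simple '' S) ↔
      ∃ ω : List B, (∀ i ∈ ω, i ∈ S) ∧ x = π ω := by
  constructor
  · intro hx
    induction hx using Subgroup.closure_induction with
    | mem y hy =>
      obtain ⟨i, hi, rfl⟩ := hy
      exact ⟨[i], by simpa using hi, by simp⟩
    | one => exact ⟨[], by simp, by simp⟩
    | mul y z _ _ hy hz =>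
      obtain ⟨ω₁, h1, rfl⟩ := hy
      obtain ⟨ω₂, h2, rfl⟩ := hz
      exact ⟨ω₁ ++ ω₂, by
        intro i hi
        rcases List.mem_append.mp hi with h | h
        · exact h1 i h
        · exact h2 i h, by rw [cs.wordProd_append]⟩
    | inv y _ hy =>
      obtain ⟨ω, h1, rfl⟩ := hy
      exact ⟨ω.reverse, fun i hi => h1 i (List.mem_reverse.mp hi), by
        rw [cs.wordProd_reverse]⟩
  · rintro ⟨ω, hsub, rfl⟩
    induction ω with
    | nil =>
      rw [cs.wordProd_nil]
      exact one_mem _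
    | cons i ω ih =>
      rw [cs.wordProd_cons]
      exact mul_mem (Subgroup.subset_closure ⟨i, hsub i (by simp), rfl⟩)
        (ih (fun j hj => hsub j (by simp [hj])))

/-- Every element of a standard parabolic subgroup has a reduced word with letters in `S`. -/
theorem exists_reduced_word_parabolic (S : Set B) {x : W}
    (hx : x ∈ Subgroup.closure (cs.simple '' S)) :
    ∃ ω : List B, (∀ i ∈ ω, i ∈ S) ∧ cs.IsReduced ω ∧ x = π ω :=
  exists_reduced_word_subset cs S ((mem_parabolic_iff cs S x).mp hx)

theorem eraseIdx_append_lt {α : Type*} (l₁ l₂ : List α) (k : ℕ) (h : k < l₁.length) :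
    (l₁ ++ l₂).eraseIdx k = l₁.eraseIdx k ++ l₂ := by
  induction l₁ generalizing k with
  | nil => simp at h
  | cons a t ih =>
    cases k with
    | zero => simp
    | succ k =>
      simp only [List.cons_append, List.eraseIdx_cons_succ]
      rw [ih k (by rw [List.length_cons] at h; omega)]

theorem eraseIdx_append_ge {α : Type*} (l₁ l₂ : List α) (k : ℕ) (h : l₁.length ≤ k) :
    (l₁ ++ l₂).eraseIdx k = l₁ ++ l₂.eraseIdx (k - l₁.length) := by
  induction l₁ generalizing k with
  | nil => simp
  | cons a t ih =>
    cases k with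
    | zero => simp at h
    | succ k =>
      simp only [List.cons_append, List.eraseIdx_cons_succ]
      rw [ih k (by rw [List.length_cons] at h; omega)]
      rw [List.length_cons, show k + 1 - (t.length + 1) = k - t.length by omega]

section DoubleCoset

variable (I J : Set B) (w : W)

/-- If `w` is minimal in its double coset, lengths add on the right. -/
theorem length_mul_right_add
    (hw : ∀ u ∈ Subgroup.closure (cs.simple '' I), ∀ v ∈ Subgroup.closure (cs.simple '' J),
      ℓ w ≤ ℓ (u * w * v)) :
    ∀ v ∈ Subgroup.closure (cs.simple '' J), ℓ (w * v) = ℓ w + ℓ v := by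
  intro v hv
  generalize hn : ℓ v = n
  induction n using Nat.strong_induction_on generalizing v with
  | _ n ih =>
  subst hn
  obtain ⟨ω, hsub, hred, rfl⟩ := exists_reduced_word_parabolic cs J hv
  rcases List.eq_nil_or_concat' ω with rfl | ⟨ω', j, rfl⟩
  · simp
  have hred' : cs.IsReduced ω' := by
    have := hred.take ω'.length
    rwa [List.take_left] at this
  have hj : j ∈ J := hsub j (by simp)
  have hsj : s j ∈ Subgroup.closure (cs.simple '' J) :=
    Subgroup.subset_closure ⟨j, hj, rfl⟩
  have hv' : π ω' ∈ Subgroup.closure (cs.simple '' J) :=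
    (mem_parabolic_iff cs J _).mpr ⟨ω', fun i hi => hsub i (by simp [hi]), rfl⟩
  have hlv : ℓ (π (ω' ++ [j])) = ω'.length + 1 := by
    rw [hred]; simp
  have hlv' : ℓ (π ω') = ω'.length := hred'
  have ihv' : ℓ (w * π ω') = ℓ w + ℓ (π ω') := ih (ℓ (π ω')) (by omega) _ hv' rfl
  have hsplit : π (ω' ++ [j]) = π ω' * s j := by
    rw [cs.wordProd_append, cs.wordProd_singleton]
  rcases cs.length_mul_simple (w * π ω') j with hc | hc
  · rw [hsplit] at hlv ⊢
    rw [← mul_assoc, hc, ihv', hlv', hlv]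
    omega
  exfalso
  obtain ⟨ρ, hρlen, hρ⟩ := exists_reduced_word' cs w
  have hπρω : π (ρ ++ ω') = w * π ω' := by rw [cs.wordProd_append, ← hρ]
  have hredc : cs.IsReduced (ρ ++ ω') := by
    unfold CoxeterSystem.IsReduced
    rw [hπρω, ihv', List.length_append, hρlen, hlv']
  have hdesc : ℓ (π (ρ ++ ω') * s j) < ℓ (π (ρ ++ ω')) := by
    rw [hπρω]
    omega
  obtain ⟨k, hk, hdel⟩ := right_exchange cs hredc hdesc
  rw [List.length_append] at hk
  rcases lt_or_ge k ρ.length with hlt | hge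
  · rw [eraseIdx_append_lt _ _ _ hlt] at hdel
    rw [hπρω, cs.wordProd_append] at hdel
    -- hdel : w * π ω' * s j = π (ρ.eraseIdx k) * π ω'
    have key : w * (π ω' * s j * (π ω')⁻¹) = π (ρ.eraseIdx k) := by
      rw [← mul_assoc, ← mul_assoc, hdel, mul_assoc, mul_inv_cancel, mul_one]
    have hW : π ω' * s j * (π ω')⁻¹ ∈ Subgroup.closure (cs.simple '' J) :=
      mul_mem (mul_mem hv' hsj) (inv_mem hv')
    have hb := hw 1 (one_mem _) _ hW
    rw [one_mul, key] at hb
    have hlb := cs.length_wordProd_le (ρ.eraseIdx k)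
    rw [List.length_eraseIdx, if_pos hlt] at hlb
    omega
  · rw [eraseIdx_append_ge _ _ _ hge] at hdel
    rw [hπρω, cs.wordProd_append, ← hρ, mul_assoc] at hdel
    have key : π ω' * s j = π (ω'.eraseIdx (k - ρ.length)) := mul_left_cancel hdel
    have hlb := cs.length_wordProd_le (ω'.eraseIdx (k - ρ.length))
    rw [List.length_eraseIdx, if_pos (by omega)] at hlb
    rw [← key, ← hsplit] at hlb
    omega

/-- If `w` is minimal in its double coset, lengths add on the left. -/
theorem length_mul_left_add
    (hw : ∀ u ∈ Subgroup.closure (cs.simple '' I), ∀ v ∈ Subgroup.closure (cs.simple '' J),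
      ℓ w ≤ ℓ (u * w * v)) :
    ∀ u ∈ Subgroup.closure (cs.simple '' I), ℓ (u * w) = ℓ u + ℓ w := by
  intro u hu
  generalize hn : ℓ u = n
  induction n using Nat.strong_induction_on generalizing u with
  | _ n ih =>
  subst hn
  obtain ⟨ω, hsub, hred, rfl⟩ := exists_reduced_word_parabolic cs I hu
  rcases ω with _ | ⟨i, ω'⟩
  · simp
  have hred' : cs.IsReduced ω' := by
    have := CoxeterSystem.IsReduced.drop (ω := i :: ω') hred 1
    simpa using this
  have hi : i ∈ I := hsub i (by simp)
  have hsi : s i ∈ Subgroup.closure (cs.simple '' I) :=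
    Subgroup.subset_closure ⟨i, hi, rfl⟩
  have hu' : π ω' ∈ Subgroup.closure (cs.simple '' I) :=
    (mem_parabolic_iff cs I _).mpr ⟨ω', fun m hm => hsub m (by simp [hm]), rfl⟩
  have hlu : ℓ (π (i :: ω')) = ω'.length + 1 := by
    rw [hred]; simp
  have hlu' : ℓ (π ω') = ω'.length := hred'
  have ihu' : ℓ (π ω' * w) = ℓ (π ω') + ℓ w := ih (ℓ (π ω')) (by omega) _ hu' rfl
  have hsplit : π (i :: ω') = s i * π ω' := cs.wordProd_cons i ω'
  rcases cs.length_simple_mul (π ω' * w) i with hc | hc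
  · rw [hsplit] at hlu ⊢
    rw [mul_assoc, hc, ihu', hlu', hlu]
    omega
  exfalso
  obtain ⟨ρ, hρlen, hρ⟩ := exists_reduced_word' cs w
  have hπωρ : π (ω' ++ ρ) = π ω' * w := by rw [cs.wordProd_append, ← hρ]
  have hredc : cs.IsReduced (ω' ++ ρ) := by
    unfold CoxeterSystem.IsReduced
    rw [hπωρ, ihu', List.length_append, hρlen, hlu']
  have hdesc : ℓ (s i * π (ω' ++ ρ)) < ℓ (π (ω' ++ ρ)) := by
    rw [hπωρ]
    omega
  obtain ⟨k, hk, hdel⟩ := left_exchange cs hredc hdesc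
  rw [List.length_append] at hk
  rcases lt_or_ge k ω'.length with hlt | hge
  · rw [eraseIdx_append_lt _ _ _ hlt] at hdel
    rw [hπωρ, cs.wordProd_append, ← hρ, ← mul_assoc] at hdel
    have key : s i * π ω' = π (ω'.eraseIdx k) := mul_right_cancel hdel
    have hlb := cs.length_wordProd_le (ω'.eraseIdx k)
    rw [List.length_eraseIdx, if_pos hlt] at hlb
    rw [← key, ← hsplit] at hlb
    omega
  · rw [eraseIdx_append_ge _ _ _ hge] at hdel
    rw [hπωρ, cs.wordProd_append] at hdel
    -- hdel : s i * (π ω' * w) = π ω' * π (ρ.eraseIdx (k - |ω'|))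
    have key : ((π ω')⁻¹ * s i * π ω') * w * 1 = π (ρ.eraseIdx (k - ω'.length)) := by
      calc ((π ω')⁻¹ * s i * π ω') * w * 1
          = (π ω')⁻¹ * (s i * (π ω' * w)) := by group
        _ = (π ω')⁻¹ * (π ω' * π (ρ.eraseIdx (k - ω'.length))) := by rw [hdel]
        _ = π (ρ.eraseIdx (k - ω'.length)) := by group
    have hW : (π ω')⁻¹ * s i * π ω' ∈ Subgroup.closure (cs.simple '' I) :=
      mul_mem (mul_mem (inv_mem hu') hsi) hu'
    have hb := hw _ hW 1 (one_mem _)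
    rw [key] at hb
    have hlb := cs.length_wordProd_le (ρ.eraseIdx (k - ω'.length))
    rw [List.length_eraseIdx, if_pos (by omega)] at hlb
    omega

/-- Kilmoyer-type statement: `WH` is generated by the simple reflections it contains. -/
theorem WH_le_closure_K
    (hw : ∀ u ∈ Subgroup.closure (cs.simple '' I), ∀ v ∈ Subgroup.closure (cs.simple '' J),
      ℓ w ≤ ℓ (u * w * v))
    (WH : Subgroup W)
    (hWH : WH = Subgroup.closure (cs.simple '' I) ⊓
      (Subgroup.closure (cs.simple '' J)).map (MulAut.conj w).toMonoidHom) :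
    ∀ h ∈ WH, h ∈ Subgroup.closure (cs.simple '' {i : B | i ∈ I ∧ cs.simple i ∈ WH}) := by
  intro h hh
  generalize hn : ℓ h = n
  induction n using Nat.strong_induction_on generalizing h with
  | _ n ih =>
  subst hn
  have hhI : h ∈ Subgroup.closure (cs.simple '' I) := by
    rw [hWH] at hh
    exact hh.1
  rcases eq_or_ne h 1 with rfl | hne
  · exact one_mem _
  obtain ⟨ω, hsub, hred, rfl⟩ := exists_reduced_word_parabolic cs I hhI
  cases ω with
  | nil => exact absurd (cs.wordProd_nil) hne
  | cons i ω' =>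
  have hred' : cs.IsReduced ω' := by
    have := CoxeterSystem.IsReduced.drop (ω := i :: ω') hred 1
    simpa using this
  have hi : i ∈ I := hsub i (by simp)
  have hu' : π ω' ∈ Subgroup.closure (cs.simple '' I) :=
    (mem_parabolic_iff cs I _).mpr ⟨ω', fun m hm => hsub m (by simp [hm]), rfl⟩
  have hlh : ℓ (π (i :: ω')) = ω'.length + 1 := by rw [hred]; simp
  have hlu' : ℓ (π ω') = ω'.length := hred'
  have hsplit : π (i :: ω') = s i * π ω' := cs.wordProd_cons i ω'
  have hmap : π (i :: ω') ∈ (Subgroup.closure (cs.simple '' J)).map (MulAut.conj w).toMonoidHom := by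
    rw [hWH] at hh
    exact hh.2
  obtain ⟨y, hy, hconj⟩ := hmap
  have hconj' : w * y * w⁻¹ = π (i :: ω') := hconj
  have hyw : π (i :: ω') * w = w * y := by rw [← hconj']; group
  have hℓhw : ℓ (π (i :: ω') * w) = ℓ (π (i :: ω')) + ℓ w :=
    length_mul_left_add cs I J w hw _ hhI
  have hℓwy : ℓ (w * y) = ℓ w + ℓ y :=
    length_mul_right_add cs I J w hw y hy
  have hℓy : ℓ y = ℓ (π (i :: ω')) := by
    rw [hyw] at hℓhw
    omega
  obtain ⟨ωy, hsuby, hredy, rfl⟩ := exists_reduced_word_parabolic cs J hy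
  have hlny : ℓ (π ωy) = ωy.length := hredy
  obtain ⟨ρ, hρlen, hρ⟩ := exists_reduced_word' cs w
  have hπc : π (ρ ++ ωy) = w * π ωy := by rw [cs.wordProd_append, ← hρ]
  have hredc : cs.IsReduced (ρ ++ ωy) := by
    unfold CoxeterSystem.IsReduced
    rw [hπc, hℓwy, List.length_append, hρlen, hlny]
  have hππ : s i * (w * π ωy) = π ω' * w := by
    rw [← hyw, hsplit, ← mul_assoc, ← mul_assoc, cs.simple_mul_simple_self, one_mul]
  have hdesc : ℓ (s i * π (ρ ++ ωy)) < ℓ (π (ρ ++ ωy)) := by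
    rw [hπc, hππ, length_mul_left_add cs I J w hw _ hu']
    omega
  obtain ⟨k, hk, hdel⟩ := left_exchange cs hredc hdesc
  rw [List.length_append] at hk
  have hsiWH : s i ∈ WH := by
    rcases lt_or_ge k ρ.length with hlt | hge
    · exfalso
      rw [eraseIdx_append_lt _ _ _ hlt, hπc, cs.wordProd_append, ← mul_assoc] at hdel
      have key : s i * w = π (ρ.eraseIdx k) := mul_right_cancel hdel
      have hb := hw (s i) (Subgroup.subset_closure ⟨i, hi, rfl⟩) 1 (one_mem _)
      rw [mul_one, key] at hb
      have hlb := cs.length_wordProd_le (ρ.eraseIdx k)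
      rw [List.length_eraseIdx, if_pos hlt] at hlb
      omega
    · rw [eraseIdx_append_ge _ _ _ hge, hπc, cs.wordProd_append, ← hρ] at hdel
      -- hdel : s i * (w * π ωy) = w * π (ωy.eraseIdx (k - ρ.length))
      have hz : w * (π (ωy.eraseIdx (k - ρ.length)) * (π ωy)⁻¹) * w⁻¹ = s i := by
        calc w * (π (ωy.eraseIdx (k - ρ.length)) * (π ωy)⁻¹) * w⁻¹
            = (w * π (ωy.eraseIdx (k - ρ.length))) * ((π ωy)⁻¹ * w⁻¹) := by group
          _ = (s i * (w * π ωy)) * ((π ωy)⁻¹ * w⁻¹) := by rw [hdel]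
          _ = s i := by group
      rw [hWH]
      refine ⟨Subgroup.subset_closure ⟨i, hi, rfl⟩, ?_⟩
      refine ⟨π (ωy.eraseIdx (k - ρ.length)) * (π ωy)⁻¹, ?_, hz⟩
      refine mul_mem ?_ (inv_mem hy)
      refine (mem_parabolic_iff cs J _).mpr ⟨ωy.eraseIdx (k - ρ.length), ?_, rfl⟩
      exact fun m hm => hsuby m ((List.eraseIdx_sublist _ _).subset hm)
  have hmemK : π ω' ∈ WH := by
    have : s i * π (i :: ω') = π ω' := by
      rw [hsplit, ← mul_assoc, cs.simple_mul_simple_self, one_mul]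
    rw [← this]
    exact mul_mem hsiWH hh
  have hωK := ih ω'.length (by omega) (π ω') hmemK hlu'
  rw [hsplit]
  exact mul_mem (Subgroup.subset_closure ⟨i, ⟨hi, hsiWH⟩, rfl⟩) hωK

/-- Minimal coset representatives: lengths add. -/
theorem coset_min_mul_add (K : Set B) (u : W)
    (hmin : ∀ h ∈ Subgroup.closure (cs.simple '' K), ℓ u ≤ ℓ (u * h)) :
    ∀ h ∈ Subgroup.closure (cs.simple '' K), ℓ (u * h) = ℓ u + ℓ h := by
  intro h hh
  generalize hn : ℓ h = n
  induction n using Nat.strong_induction_on generalizing h with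
  | _ n ih =>
  subst hn
  obtain ⟨ω, hsub, hred, rfl⟩ := exists_reduced_word_parabolic cs K hh
  rcases List.eq_nil_or_concat' ω with rfl | ⟨ω', j, rfl⟩
  · simp
  have hred' : cs.IsReduced ω' := by
    have := hred.take ω'.length
    rwa [List.take_left] at this
  have hj : j ∈ K := hsub j (by simp)
  have hsj : s j ∈ Subgroup.closure (cs.simple '' K) :=
    Subgroup.subset_closure ⟨j, hj, rfl⟩
  have hh' : π ω' ∈ Subgroup.closure (cs.simple '' K) :=
    (mem_parabolic_iff cs K _).mpr ⟨ω', fun m hm => hsub m (by simp [hm]), rfl⟩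
  have hlh : ℓ (π (ω' ++ [j])) = ω'.length + 1 := by rw [hred]; simp
  have hlh' : ℓ (π ω') = ω'.length := hred'
  have ihh' : ℓ (u * π ω') = ℓ u + ℓ (π ω') := ih (ℓ (π ω')) (by omega) _ hh' rfl
  have hsplit : π (ω' ++ [j]) = π ω' * s j := by
    rw [cs.wordProd_append, cs.wordProd_singleton]
  rcases cs.length_mul_simple (u * π ω') j with hc | hc
  · rw [hsplit] at hlh ⊢
    rw [← mul_assoc, hc, ihh', hlh', hlh]
    omega
  exfalso
  obtain ⟨ρ, hρlen, hρ⟩ := exists_reduced_word' cs u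
  have hπc : π (ρ ++ ω') = u * π ω' := by rw [cs.wordProd_append, ← hρ]
  have hredc : cs.IsReduced (ρ ++ ω') := by
    unfold CoxeterSystem.IsReduced
    rw [hπc, ihh', List.length_append, hρlen, hlh']
  have hdesc : ℓ (π (ρ ++ ω') * s j) < ℓ (π (ρ ++ ω')) := by
    rw [hπc]
    omega
  obtain ⟨k, hk, hdel⟩ := right_exchange cs hredc hdesc
  rw [List.length_append] at hk
  rcases lt_or_ge k ρ.length with hlt | hge
  · rw [eraseIdx_append_lt _ _ _ hlt, hπc, cs.wordProd_append] at hdel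
    -- hdel : u * π ω' * s j = π (ρ.eraseIdx k) * π ω'
    have key : u * (π ω' * s j * (π ω')⁻¹) = π (ρ.eraseIdx k) := by
      calc u * (π ω' * s j * (π ω')⁻¹)
          = (u * π ω' * s j) * (π ω')⁻¹ := by group
        _ = (π (ρ.eraseIdx k) * π ω') * (π ω')⁻¹ := by rw [hdel]
        _ = π (ρ.eraseIdx k) := by group
    have hb := hmin _ (mul_mem (mul_mem hh' hsj) (inv_mem hh'))
    rw [key] at hb
    have hlb := cs.length_wordProd_le (ρ.eraseIdx k)
    rw [List.length_eraseIdx, if_pos hlt] at hlb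
    omega
  · rw [eraseIdx_append_ge _ _ _ hge, hπc, cs.wordProd_append, ← hρ, mul_assoc] at hdel
    have key : π ω' * s j = π (ω'.eraseIdx (k - ρ.length)) := mul_left_cancel hdel
    have hlb := cs.length_wordProd_le (ω'.eraseIdx (k - ρ.length))
    rw [List.length_eraseIdx, if_pos (by omega)] at hlb
    rw [← key, ← hsplit] at hlb
    omega

/-- Howlett's length formula for minimal coset representatives. -/
theorem min_rep_length_add
    (hw : ∀ u ∈ Subgroup.closure (cs.simple '' I), ∀ v ∈ Subgroup.closure (cs.simple '' J),
      ℓ w ≤ ℓ (u * w * v))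
    (WH : Subgroup W)
    (hWH : WH = Subgroup.closure (cs.simple '' I) ⊓
      (Subgroup.closure (cs.simple '' J)).map (MulAut.conj w).toMonoidHom)
    (u : W) (hu : u ∈ Subgroup.closure (cs.simple '' I))
    (hmin : ∀ h ∈ WH, ℓ u ≤ ℓ (u * h)) :
    ∀ v ∈ Subgroup.closure (cs.simple '' J), ℓ (u * w * v) = ℓ u + ℓ w + ℓ v := by
  intro v hv
  generalize hn : ℓ v = n
  induction n using Nat.strong_induction_on generalizing v with
  | _ n ih =>
  subst hn
  obtain ⟨ω, hsub, hred, rfl⟩ := exists_reduced_word_parabolic cs J hv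
  rcases List.eq_nil_or_concat' ω with rfl | ⟨ω', j, rfl⟩
  · rw [cs.wordProd_nil, mul_one, cs.length_one, add_zero]
    exact length_mul_left_add cs I J w hw u hu
  have hred' : cs.IsReduced ω' := by
    have := hred.take ω'.length
    rwa [List.take_left] at this
  have hj : j ∈ J := hsub j (by simp)
  have hsj : s j ∈ Subgroup.closure (cs.simple '' J) :=
    Subgroup.subset_closure ⟨j, hj, rfl⟩
  have hv' : π ω' ∈ Subgroup.closure (cs.simple '' J) :=
    (mem_parabolic_iff cs J _).mpr ⟨ω', fun m hm => hsub m (by simp [hm]), rfl⟩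
  have hlv : ℓ (π (ω' ++ [j])) = ω'.length + 1 := by rw [hred]; simp
  have hlv' : ℓ (π ω') = ω'.length := hred'
  have ihv' : ℓ (u * w * π ω') = ℓ u + ℓ w + ℓ (π ω') := ih (ℓ (π ω')) (by omega) _ hv' rfl
  have hsplit : π (ω' ++ [j]) = π ω' * s j := by
    rw [cs.wordProd_append, cs.wordProd_singleton]
  rcases cs.length_mul_simple (u * w * π ω') j with hc | hc
  · rw [hsplit] at hlv ⊢
    rw [← mul_assoc, hc, ihv', hlv', hlv]
    omega
  exfalso
  obtain ⟨ρu, hsubu, hredu, hρu⟩ := exists_reduced_word_parabolic cs I hu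
  have hρulen : ρu.length = ℓ u := by rw [hρu]; exact hredu.symm
  obtain ⟨ρw, hρwlen, hρw⟩ := exists_reduced_word' cs w
  have hπc : π (ρu ++ (ρw ++ ω')) = u * w * π ω' := by
    rw [cs.wordProd_append, cs.wordProd_append, ← hρu, ← hρw, mul_assoc]
  have hredc : cs.IsReduced (ρu ++ (ρw ++ ω')) := by
    unfold CoxeterSystem.IsReduced
    rw [hπc, ihv', List.length_append, List.length_append, hρulen, hρwlen, hlv']
    omega
  have hdesc : ℓ (π (ρu ++ (ρw ++ ω')) * s j) < ℓ (π (ρu ++ (ρw ++ ω'))) := by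
    rw [hπc]
    omega
  obtain ⟨k, hk, hdel⟩ := right_exchange cs hredc hdesc
  rw [List.length_append, List.length_append] at hk
  rcases lt_or_ge k ρu.length with hlt | hge
  · -- erase in the u part
    rw [eraseIdx_append_lt _ _ _ hlt, hπc, cs.wordProd_append, cs.wordProd_append,
      ← hρw] at hdel
    -- hdel : u * w * π ω' * s j = π (ρu.eraseIdx k) * (w * π ω')
    have key : u * (w * (π ω' * s j * (π ω')⁻¹) * w⁻¹) = π (ρu.eraseIdx k) := by
      calc u * (w * (π ω' * s j * (π ω')⁻¹) * w⁻¹)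
          = (u * w * π ω' * s j) * ((π ω')⁻¹ * w⁻¹) := by group
        _ = (π (ρu.eraseIdx k) * (w * π ω')) * ((π ω')⁻¹ * w⁻¹) := by rw [hdel]
        _ = π (ρu.eraseIdx k) := by group
    have hUI : π (ρu.eraseIdx k) ∈ Subgroup.closure (cs.simple '' I) :=
      (mem_parabolic_iff cs I _).mpr ⟨ρu.eraseIdx k,
        fun m hm => hsubu m ((List.eraseIdx_sublist _ _).subset hm), rfl⟩
    have hhWH : w * (π ω' * s j * (π ω')⁻¹) * w⁻¹ ∈ WH := by
      rw [hWH, Subgroup.mem_inf]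
      constructor
      · have : w * (π ω' * s j * (π ω')⁻¹) * w⁻¹ = u⁻¹ * π (ρu.eraseIdx k) := by
          rw [← key]
          group
        rw [this]
        exact mul_mem (inv_mem hu) hUI
      · exact ⟨π ω' * s j * (π ω')⁻¹, mul_mem (mul_mem hv' hsj) (inv_mem hv'), rfl⟩
    have hb := hmin _ hhWH
    rw [key] at hb
    have hlb := cs.length_wordProd_le (ρu.eraseIdx k)
    rw [List.length_eraseIdx, if_pos hlt] at hlb
    omega
  rcases lt_or_ge k (ρu.length + ρw.length) with hlt2 | hge2
  · -- erase in the w part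
    rw [eraseIdx_append_ge _ _ _ hge, eraseIdx_append_lt _ _ _ (by omega),
      hπc, cs.wordProd_append, cs.wordProd_append, ← hρu] at hdel
    -- hdel : u * w * π ω' * s j = u * (π (ρw.eraseIdx (k - ρu.length)) * π ω')
    have key : w * (π ω' * s j * (π ω')⁻¹) = π (ρw.eraseIdx (k - ρu.length)) := by
      have h1 : u * (w * (π ω' * s j * (π ω')⁻¹)) * 1
          = u * (π (ρw.eraseIdx (k - ρu.length))) := by
        calc u * (w * (π ω' * s j * (π ω')⁻¹)) * 1
            = (u * w * π ω' * s j) * (π ω')⁻¹ := by group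
          _ = (u * (π (ρw.eraseIdx (k - ρu.length)) * π ω')) * (π ω')⁻¹ := by rw [hdel]
          _ = u * (π (ρw.eraseIdx (k - ρu.length))) := by group
      rw [mul_one] at h1
      exact mul_left_cancel h1
    have hb := hw 1 (one_mem _) _ (mul_mem (mul_mem hv' hsj) (inv_mem hv'))
    rw [one_mul, key] at hb
    have hlb := cs.length_wordProd_le (ρw.eraseIdx (k - ρu.length))
    rw [List.length_eraseIdx, if_pos (by omega)] at hlb
    omega
  · -- erase in the v part
    rw [eraseIdx_append_ge _ _ _ hge, eraseIdx_append_ge _ _ _ (by omega),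
      hπc, cs.wordProd_append, cs.wordProd_append, ← hρu, ← hρw, mul_assoc, mul_assoc] at hdel
    -- hdel : u * w * π ω' * s j = u * (w * π (ω'.eraseIdx (k - ρu.length - ρw.length)))
    have key : π ω' * s j = π (ω'.eraseIdx (k - ρu.length - ρw.length)) := by
      have h1 : u * (w * (π ω' * s j)) = u * (w * π (ω'.eraseIdx (k - ρu.length - ρw.length))) := by
        rw [← hdel]
      exact mul_left_cancel (mul_left_cancel h1)
    have hlb := cs.length_wordProd_le (ω'.eraseIdx (k - ρu.length - ρw.length))
    rw [List.length_eraseIdx, if_pos (by omega)] at hlb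
    rw [← key, ← hsplit] at hlb
    omega

end DoubleCoset

end CoxHelper


/-- Let `(W, S)` be a Coxeter system, `I, J ⊆ S`, and `w` a minimal-length representative
of the double coset `W_I w W_J`. Let `W_H = W_I ∩ w W_J w⁻¹`. Then every element of
`W_I w W_J` has a unique expression `u * w * v` where `u ∈ W_I` is a minimal-length coset
representative of `W_I / W_H`, `v ∈ W_J`, and `ℓ(uwv) = ℓ(u) + ℓ(w) + ℓ(v)`. -/
theorem double_coset_unique_normal_form {B W : Type*} [Group W] {M : CoxeterMatrix B}
    (cs : CoxeterSystem M W) (I J : Set B) (w : W)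
    (WI : Subgroup W) (WJ : Subgroup W) (WH : Subgroup W)
    (hWI : WI = Subgroup.closure (cs.simple '' I))
    (hWJ : WJ = Subgroup.closure (cs.simple '' J))
    (hWH : WH = WI ⊓ WJ.map (MulAut.conj w).toMonoidHom)
    (hw : ∀ u ∈ WI, ∀ v ∈ WJ, cs.length w ≤ cs.length (u * w * v)) :
    ∀ z : W, (∃ u ∈ WI, ∃ v ∈ WJ, z = u * w * v) →
      ∃! p : W × W, p.1 ∈ WI ∧ p.2 ∈ WJ ∧
        (∀ h ∈ WH, cs.length (p.1 * h) = cs.length p.1 + cs.length h) ∧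
        z = p.1 * w * p.2 ∧
        cs.length z = cs.length p.1 + cs.length w + cs.length p.2 := by
  subst hWI
  subst hWJ
  subst hWH
  classical
  intro z hz
  obtain ⟨u₀, hu₀, v₀, hv₀, hz₀⟩ := hz
  have hex : ∃ n : ℕ, ∃ u : W, (u ∈ Subgroup.closure (cs.simple '' I) ∧
      ∃ v ∈ Subgroup.closure (cs.simple '' J), z = u * w * v) ∧ cs.length u = n :=
    ⟨cs.length u₀, u₀, ⟨hu₀, v₀, hv₀, hz₀⟩, rfl⟩
  obtain ⟨u, ⟨hu, v, hv, hzuv⟩, hlenu⟩ := Nat.find_spec hex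
  have hminP : ∀ u' : W, (u' ∈ Subgroup.closure (cs.simple '' I) ∧
      ∃ v' ∈ Subgroup.closure (cs.simple '' J), z = u' * w * v') →
      cs.length u ≤ cs.length u' := by
    intro u' hu'
    rw [hlenu]
    exact Nat.find_le ⟨u', hu', rfl⟩
  have hmin : ∀ h ∈ (Subgroup.closure (cs.simple '' I) ⊓
      (Subgroup.closure (cs.simple '' J)).map (MulAut.conj w).toMonoidHom),
      cs.length u ≤ cs.length (u * h) := by
    intro h hh
    rw [Subgroup.mem_inf] at hh
    obtain ⟨y, hy, hconj⟩ := hh.2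
    have hconj' : w * y * w⁻¹ = h := hconj
    apply hminP
    refine ⟨mul_mem hu hh.1, y⁻¹ * v, mul_mem (inv_mem hy) hv, ?_⟩
    rw [hzuv, ← hconj']
    group
  have hadd : ∀ h ∈ (Subgroup.closure (cs.simple '' I) ⊓
      (Subgroup.closure (cs.simple '' J)).map (MulAut.conj w).toMonoidHom),
      cs.length (u * h) = cs.length u + cs.length h := by
    intro h hh
    have hKle : Subgroup.closure (cs.simple '' {i : B | i ∈ I ∧
        cs.simple i ∈ (Subgroup.closure (cs.simple '' I) ⊓
          (Subgroup.closure (cs.simple '' J)).map (MulAut.conj w).toMonoidHom)}) ≤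
        (Subgroup.closure (cs.simple '' I) ⊓
          (Subgroup.closure (cs.simple '' J)).map (MulAut.conj w).toMonoidHom) := by
      rw [Subgroup.closure_le]
      rintro x ⟨i, ⟨hiI, hiWH⟩, rfl⟩
      exact hiWH
    exact CoxHelper.coset_min_mul_add cs _ u (fun h' hh' => hmin h' (hKle hh')) h
      (CoxHelper.WH_le_closure_K cs I J w hw _ rfl h hh)
  have hlz : cs.length z = cs.length u + cs.length w + cs.length v := by
    rw [hzuv]
    exact CoxHelper.min_rep_length_add cs I J w hw _ rfl u hu hmin v hv
  refine ⟨(u, v), ⟨hu, hv, hadd, hzuv, hlz⟩, ?_⟩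
  rintro ⟨u₂, v₂⟩ ⟨hu₂, hv₂, hadd₂, hz₂, _⟩
  have heq : u₂ * w * v₂ = u * w * v := by rw [← hz₂, ← hzuv]
  have hhdef : u₂⁻¹ * u = w * (v₂ * v⁻¹) * w⁻¹ := by
    calc u₂⁻¹ * u
        = u₂⁻¹ * ((u * w * v) * (v⁻¹ * w⁻¹)) := by group
      _ = u₂⁻¹ * ((u₂ * w * v₂) * (v⁻¹ * w⁻¹)) := by rw [heq]
      _ = w * (v₂ * v⁻¹) * w⁻¹ := by group
  have hhWH : u₂⁻¹ * u ∈ (Subgroup.closure (cs.simple '' I) ⊓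
      (Subgroup.closure (cs.simple '' J)).map (MulAut.conj w).toMonoidHom) := by
    rw [Subgroup.mem_inf]
    refine ⟨mul_mem (inv_mem hu₂) hu, v₂ * v⁻¹, mul_mem hv₂ (inv_mem hv), hhdef.symm⟩
  have h1 : cs.length u = cs.length u₂ + cs.length (u₂⁻¹ * u) := by
    have := hadd₂ _ hhWH
    rwa [mul_inv_cancel_left] at this
  have h2 : cs.length u₂ = cs.length u + cs.length (u₂⁻¹ * u) := by
    have hinv := inv_mem hhWH
    have := hadd _ hinv
    rw [cs.length_inv, show u * (u₂⁻¹ * u)⁻¹ = u₂ by group] at this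
    exact this
  have hl0 : cs.length (u₂⁻¹ * u) = 0 := by omega
  have hone : u₂⁻¹ * u = 1 := cs.length_eq_zero_iff.mp hl0
  have hu2u : u₂ = u := by
    rw [← mul_one u₂, ← hone, mul_inv_cancel_left]
  have hv2v : v₂ = v := by
    have : u * w * v₂ = u * w * v := by rw [← heq, hu2u]
    exact mul_left_cancel this
  rw [hu2u, hv2v]
end

section
/- Let $W = S_{2m+1}$ with simple reflections $S = \{s_1,\dots,s_{2m}\}$ and $I = \{s_1,\dots,s_m\}$. Then the poset of $(W_I, W_I)$-double cosets of $W$ (ordered by Bruhat order on maximal representatives) with order reversed is isomorphic to the rook monoid $R_m$ with the Bruhat–Chevalley–Renner order. -/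
/-- The strong Bruhat order on `S_N`: the reflexive-transitive closure of
multiplication by a transposition that increases the length. -/
def bruhatLE {N : ℕ} : Equiv.Perm (Fin N) → Equiv.Perm (Fin N) → Prop :=
  Relation.ReflTransGen fun a b =>
    invLen a < invLen b ∧ ∃ u v : Fin N, u ≠ v ∧ b = a * Equiv.swap u v

/-- The simple transpositions `s_1, …, s_m` of `S_{2m+1}` (0-based: swapping `k` and
`k+1` for `k < m`). -/
def genI (m : ℕ) : Set (Equiv.Perm (Fin (2 * m + 1))) :=
  {σ | ∃ k : ℕ, ∃ hk : k < m, σ = Equiv.swap ⟨k, by omega⟩ ⟨k + 1, by omega⟩}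

/-- The parabolic subgroup `W_I` of `S_{2m+1}` generated by `I = {s_1, …, s_m}`. -/
def WI (m : ℕ) : Subgroup (Equiv.Perm (Fin (2 * m + 1))) := Subgroup.closure (genI m)

/-- The `(W_I, W_I)`-double coset equivalence: `x ∼ y` iff `y = u x v` with `u, v ∈ W_I`. -/
def dcRel (m : ℕ) (x y : Equiv.Perm (Fin (2 * m + 1))) : Prop :=
  ∃ u ∈ WI m, ∃ v ∈ WI m, y = u * x * v

/-- `x₁` is the Bruhat-maximal representative of the double coset of `x`. -/
def maxRep (m : ℕ) (x₁ x : Equiv.Perm (Fin (2 * m + 1))) : Prop :=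
  dcRel m x₁ x ∧ ∀ z, dcRel m z x → bruhatLE z x₁

/-- The order on `(W_I, W_I)`-double cosets: `[x] ≤ [y]` iff the Bruhat-maximal
representatives satisfy `x₁ ≤ y₁` in Bruhat order. -/
def dcLE (m : ℕ) (x y : Equiv.Perm (Fin (2 * m + 1))) : Prop :=
  ∃ x₁ y₁, maxRep m x₁ x ∧ maxRep m y₁ y ∧ bruhatLE x₁ y₁

/-- The rook monoid `R_m`: injective partial functions on `{1,…,m}`, encoded in
one-line notation as functions `Fin m → ℕ` with values in `{0,…,m}` (`0` meaning
"undefined") that are injective on nonzero values. -/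
def Rook (m : ℕ) : Type :=
  {σ : Fin m → ℕ // (∀ i, σ i ≤ m) ∧ ∀ i j, σ i ≠ 0 → σ i = σ j → i = j}

/-- The non-increasing rearrangement of the first `k` entries of the one-line notation. -/
def prefSort {m : ℕ} (σ : Fin m → ℕ) (k : ℕ) : List ℕ :=
  List.insertionSort (· ≥ ·) ((List.ofFn σ).take k)

/-- The Bruhat–Chevalley–Renner order on the rook monoid. -/
def rookLE {m : ℕ} (τ σ : Rook m) : Prop :=
  ∀ k : ℕ, List.Forall₂ (· ≤ ·) (prefSort τ.1 k) (prefSort σ.1 k)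


namespace BCR

variable {N : ℕ}

def invSet (x : Equiv.Perm (Fin N)) : Finset (Fin N × Fin N) :=
  Finset.univ.filter fun p => p.1 < p.2 ∧ x p.2 < x p.1

lemma invLen_eq (x : Equiv.Perm (Fin N)) : invLen x = (invSet x).card := by
  rw [invLen, invSet, Nat.card_eq_fintype_card, Fintype.card_subtype]

lemma swap_apply (x : Equiv.Perm (Fin N)) (u v a : Fin N) :
    (x * Equiv.swap u v) a = if a = u then x v else if a = v then x u else x a := by
  rw [Equiv.Perm.mul_apply, Equiv.swap_apply_def]
  split_ifs <;> rfl

lemma invLen_swap_lt (x : Equiv.Perm (Fin N)) {u v : Fin N} (huv : u < v)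
    (hx : x u < x v) : invLen x < invLen (x * Equiv.swap u v) := by
  set b := x * Equiv.swap u v with hbdef
  have hb : ∀ a, b a = if a = u then x v else if a = v then x u else x a := swap_apply x u v
  have hbu : b u = x v := by rw [hb]; simp
  have hbv : b v = x u := by rw [hb]; simp [huv.ne']
  have hbo : ∀ a, a ≠ u → a ≠ v → b a = x a := by
    intro a h1 h2; rw [hb]; simp [h1, h2]
  rw [invLen_eq, invLen_eq]
  have huvmem : (u, v) ∈ invSet b := by
    simp only [invSet, Finset.mem_filter, Finset.mem_univ, true_and]
    exact ⟨huv, by rw [hbu, hbv]; exact hx⟩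
  have hcard : (invSet x).card ≤ ((invSet b).erase (u, v)).card := by
    apply Finset.card_le_card_of_injOn
      (fun p => if p.2 = u ∧ x p.1 < x v then (p.1, v)
        else if p.1 = v ∧ x u < x p.2 then (u, p.2) else p)
    · intro p hp
      simp only [Finset.mem_coe] at hp ⊢
      simp only [invSet, Finset.mem_filter, Finset.mem_univ, true_and] at hp
      obtain ⟨hp1, hp2⟩ := hp
      have hinj := x.injective
      split_ifs with hA hB
      · obtain ⟨h2u, hlt⟩ := hA
        have hp1u : p.1 < u := h2u ▸ hp1
        have hne : p.1 ≠ u := ne_of_lt hp1u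
        have hne' : p.1 ≠ v := ne_of_lt (lt_trans hp1u huv)
        rw [Finset.mem_erase]
        constructor
        · intro h; rw [Prod.mk.injEq] at h; exact hne h.1
        · simp only [invSet, Finset.mem_filter, Finset.mem_univ, true_and]
          refine ⟨lt_trans hp1u huv, ?_⟩
          rw [hbv, hbo _ hne hne', ← h2u]; exact hp2
      · obtain ⟨h1v, hlt⟩ := hB
        have hvp2 : v < p.2 := h1v ▸ hp1
        have hne : p.2 ≠ v := ne_of_gt hvp2
        have hne' : p.2 ≠ u := ne_of_gt (lt_trans huv hvp2)
        rw [Finset.mem_erase]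
        constructor
        · intro h; rw [Prod.mk.injEq] at h; exact hne h.2
        · simp only [invSet, Finset.mem_filter, Finset.mem_univ, true_and]
          refine ⟨lt_trans huv hvp2, ?_⟩
          rw [hbu, hbo _ hne' hne, ← h1v]; exact hp2
      · rw [Finset.mem_erase]
        have hpne : p ≠ (u, v) := by
          intro h; rw [h] at hp2; simp only at hp2
          exact absurd hx (not_lt_of_gt hp2)
        refine ⟨hpne, ?_⟩
        simp only [invSet, Finset.mem_filter, Finset.mem_univ, true_and]
        refine ⟨hp1, ?_⟩
        by_cases h2u : p.2 = u
        · have h1 : ¬ (x p.1 < x v) := fun h => hA ⟨h2u, h⟩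
          have hne1u : p.1 ≠ u := ne_of_lt (h2u ▸ hp1)
          have hne1v : p.1 ≠ v := ne_of_lt (lt_trans (h2u ▸ hp1) huv)
          have e2 : b p.2 = x v := by rw [h2u, hbu]
          have e1 : b p.1 = x p.1 := hbo _ hne1u hne1v
          rw [e1, e2]
          rcases lt_or_eq_of_le (not_lt.mp h1) with h | h
          · exact h
          · exact absurd (hinj h) hne1v.symm
        · by_cases h2v : p.2 = v
          · have h1u : p.1 ≠ u := by
              intro h; apply hpne
              exact Prod.ext h h2v
            have h1v : p.1 ≠ v := ne_of_lt (h2v ▸ hp1)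
            have e2 : b p.2 = x u := by rw [h2v, hbv]
            have e1 : b p.1 = x p.1 := hbo _ h1u h1v
            rw [e1, e2]
            rw [h2v] at hp2
            exact lt_trans hx hp2
          · have e2 : b p.2 = x p.2 := hbo _ h2u h2v
            rw [e2]
            by_cases h1u : p.1 = u
            · have e1 : b p.1 = x v := by rw [h1u, hbu]
              rw [e1]
              rw [h1u] at hp2
              exact lt_trans hp2 hx
            · by_cases h1v : p.1 = v
              · have h1 : ¬ (x u < x p.2) := fun h => hB ⟨h1v, h⟩
                have e1 : b p.1 = x u := by rw [h1v, hbv]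
                rw [e1]
                rcases lt_or_eq_of_le (not_lt.mp h1) with h | h
                · exact h
                · exact absurd (hinj h) h2u
              · rw [hbo _ h1u h1v]; exact hp2
    · intro p hp p' hp' heq
      simp only [invSet, Finset.coe_filter, Set.mem_setOf_eq, Finset.mem_univ, true_and]
        at hp hp'
      simp only at heq
      by_cases hA : p.2 = u ∧ x p.1 < x v <;>
        by_cases hA' : p'.2 = u ∧ x p'.1 < x v
      · rw [if_pos hA, if_pos hA', Prod.mk.injEq] at heq
        exact Prod.ext heq.1 (hA.1.trans hA'.1.symm)
      · rw [if_pos hA] at heq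
        by_cases hB' : p'.1 = v ∧ x u < x p'.2
        · rw [if_neg hA', if_pos hB', Prod.mk.injEq] at heq
          exfalso
          have : p.1 < u := hA.1 ▸ hp.1
          rw [heq.1] at this
          exact lt_irrefl u this
        · rw [if_neg hA', if_neg hB'] at heq
          exfalso
          have h1 : p'.2 = v := by rw [← heq]
          have h2 : p'.1 = p.1 := by rw [← heq]
          have := hp'.2
          rw [h1, h2] at this
          exact absurd hA.2 (not_lt_of_gt this)
      · rw [if_pos hA'] at heq
        by_cases hB : p.1 = v ∧ x u < x p.2
        · rw [if_neg hA, if_pos hB, Prod.mk.injEq] at heq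
          exfalso
          have : p'.1 < u := hA'.1 ▸ hp'.1
          rw [← heq.1] at this
          exact lt_irrefl u this
        · rw [if_neg hA, if_neg hB] at heq
          exfalso
          have h1 : p.2 = v := by rw [heq]
          have h2 : p.1 = p'.1 := by rw [heq]
          have := hp.2
          rw [h1, h2] at this
          exact absurd hA'.2 (not_lt_of_gt this)
      · rw [if_neg hA, if_neg hA'] at heq
        by_cases hB : p.1 = v ∧ x u < x p.2 <;>
          by_cases hB' : p'.1 = v ∧ x u < x p'.2
        · rw [if_pos hB, if_pos hB', Prod.mk.injEq] at heq
          exact Prod.ext (hB.1.trans hB'.1.symm) heq.2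
        · rw [if_pos hB, if_neg hB'] at heq
          exfalso
          have h1 : p'.1 = u := by rw [← heq]
          have h2 : p'.2 = p.2 := by rw [← heq]
          have := hp'.2
          rw [h1, h2] at this
          exact absurd hB.2 (not_lt_of_gt this)
        · rw [if_neg hB, if_pos hB'] at heq
          exfalso
          have h1 : p.1 = u := by rw [heq]
          have h2 : p.2 = p'.2 := by rw [heq]
          have := hp.2
          rw [h1, h2] at this
          exact absurd hB'.2 (not_lt_of_gt this)
        · rw [if_neg hB, if_neg hB'] at heq
          exact heq
  calc (invSet x).card ≤ ((invSet b).erase (u, v)).card := hcard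
    _ < (invSet b).card := Finset.card_erase_lt_of_mem huvmem

end BCR

-- Part 2: rank function machinery
namespace BCR
variable {N : ℕ}

/-- number of `a` with `lo ≤ a < hi` and `w a ≥ q`. -/
def cnt (w : Equiv.Perm (Fin N)) (lo hi q : ℕ) : ℕ :=
  (Finset.univ.filter fun a : Fin N => lo ≤ a.val ∧ a.val < hi ∧ q ≤ (w a).val).card

def rnk (w : Equiv.Perm (Fin N)) (p q : ℕ) : ℕ := cnt w 0 p q

lemma cnt_split (w : Equiv.Perm (Fin N)) {lo mid hi : ℕ} (h1 : lo ≤ mid) (h2 : mid ≤ hi)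
    (q : ℕ) : cnt w lo hi q = cnt w lo mid q + cnt w mid hi q := by
  rw [cnt, cnt, cnt, ← Finset.card_union_of_disjoint]
  · congr 1
    ext a
    simp only [Finset.mem_union, Finset.mem_filter, Finset.mem_univ, true_and]
    constructor
    · rintro ⟨ha, hb, hc⟩
      rcases lt_or_ge a.val mid with h | h
      · exact Or.inl ⟨ha, h, hc⟩
      · exact Or.inr ⟨h, hb, hc⟩
    · rintro (⟨ha, hb, hc⟩ | ⟨ha, hb, hc⟩)
      · exact ⟨ha, lt_of_lt_of_le hb h2, hc⟩
      · exact ⟨le_trans h1 ha, hb, hc⟩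
  · rw [Finset.disjoint_left]
    intro a ha hb
    simp only [Finset.mem_filter, Finset.mem_univ, true_and] at ha hb
    omega

lemma cnt_single (w : Equiv.Perm (Fin N)) (a : Fin N) (q : ℕ) :
    cnt w a.val (a.val + 1) q = if q ≤ (w a).val then 1 else 0 := by
  rw [cnt]
  split_ifs with h
  · rw [Finset.card_eq_one]
    refine ⟨a, ?_⟩
    ext b
    simp only [Finset.mem_filter, Finset.mem_univ, true_and, Finset.mem_singleton]
    constructor
    · rintro ⟨h1, h2, h3⟩
      exact Fin.ext (by omega)
    · rintro rfl
      exact ⟨le_refl _, by omega, h⟩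
  · rw [Finset.card_eq_zero]
    rw [Finset.eq_empty_iff_forall_notMem]
    intro b hb
    simp only [Finset.mem_filter, Finset.mem_univ, true_and] at hb
    obtain ⟨h1, h2, h3⟩ := hb
    have : b = a := Fin.ext (by omega)
    rw [this] at h3
    exact h h3

lemma cnt_congr (w w' : Equiv.Perm (Fin N)) (lo hi q : ℕ)
    (h : ∀ a : Fin N, lo ≤ a.val → a.val < hi → w a = w' a) :
    cnt w lo hi q = cnt w' lo hi q := by
  rw [cnt, cnt]
  congr 1
  apply Finset.filter_congr
  intro a _
  simp only [and_congr_right_iff]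
  intro h1 h2
  rw [h a h1 h2]

lemma cnt_anti (w : Equiv.Perm (Fin N)) (lo hi : ℕ) {q q' : ℕ} (h : q ≤ q') :
    cnt w lo hi q' ≤ cnt w lo hi q := by
  apply Finset.card_le_card
  intro a ha
  simp only [Finset.mem_filter, Finset.mem_univ, true_and] at ha ⊢
  exact ⟨ha.1, ha.2.1, le_trans h ha.2.2⟩

lemma rnk_split (w : Equiv.Perm (Fin N)) {mid p : ℕ} (h : mid ≤ p) (q : ℕ) :
    rnk w p q = rnk w mid q + cnt w mid p q := cnt_split w (Nat.zero_le _) h q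

lemma rnk_succ (w : Equiv.Perm (Fin N)) (a : Fin N) (q : ℕ) :
    rnk w (a.val + 1) q = rnk w a.val q + if q ≤ (w a).val then 1 else 0 := by
  rw [rnk_split w (Nat.le_succ a.val) q, cnt_single]

/-- Rank function determines the permutation. -/
lemma rnk_inj {x y : Equiv.Perm (Fin N)} (h : ∀ p q, rnk x p q = rnk y p q) : x = y := by
  apply Equiv.ext
  intro a
  have key : ∀ q, q ≤ (x a).val ↔ q ≤ (y a).val := by
    intro q
    have h1 := rnk_succ x a q
    have h2 := rnk_succ y a q
    rw [h, h] at h1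
    rw [h1] at h2
    constructor
    · intro hh
      by_contra hh'
      rw [if_pos hh, if_neg hh'] at h2
      omega
    · intro hh
      by_contra hh'
      rw [if_neg hh', if_pos hh] at h2
      omega
  have h1 := (key (x a).val).mp (le_refl _)
  have h2 := (key (y a).val).mpr (le_refl _)
  exact Fin.ext (le_antisymm h1 h2)

/-- A length-increasing swap increases the rank function pointwise. -/
lemma rnk_le_swap (x : Equiv.Perm (Fin N)) {u v : Fin N} (huv : u < v)
    (hx : x u < x v) (p q : ℕ) : rnk x p q ≤ rnk (x * Equiv.swap u v) p q := by
  set b := x * Equiv.swap u v with hbdef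
  have hbu : b u = x v := by rw [hbdef, swap_apply]; simp
  have hbv : b v = x u := by rw [hbdef, swap_apply]; simp [huv.ne']
  have hbo : ∀ a, a ≠ u → a ≠ v → b a = x a := by
    intro a h1 h2; rw [hbdef, swap_apply]; simp [h1, h2]
  rw [rnk, rnk, cnt, cnt]
  apply Finset.card_le_card_of_injOn (fun a => if a = v ∧ (x u).val < q then u else a)
  · intro a ha
    simp only [Finset.mem_coe, Finset.mem_filter, Finset.mem_univ, true_and] at ha ⊢
    obtain ⟨-, h2, h3⟩ := ha
    split_ifs with hc
    · obtain ⟨rfl, hq⟩ := hc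
      refine ⟨Nat.zero_le _, lt_of_le_of_lt (Nat.le_of_lt huv) h2, ?_⟩
      rw [hbu]
      have := Fin.lt_def.mp hx
      omega
    · refine ⟨Nat.zero_le _, h2, ?_⟩
      by_cases hu : a = u
      · rw [hu, hbu]
        rw [hu] at h3
        have := Fin.lt_def.mp hx
        omega
      · by_cases hv : a = v
        · have : ¬ (x u).val < q := fun hh => hc ⟨hv, hh⟩
          rw [hv, hbv]
          omega
        · rw [hbo a hu hv]
          exact h3
  · intro a ha a' ha' heq
    simp only [Finset.coe_filter, Set.mem_setOf_eq, Finset.mem_univ, true_and] at ha ha'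
    simp only at heq
    by_cases hc : a = v ∧ (x u).val < q <;> by_cases hc' : a' = v ∧ (x u).val < q
    · rw [hc.1, hc'.1]
    · rw [if_pos hc, if_neg hc'] at heq
      exfalso
      rw [← heq] at ha'
      exact absurd ha'.2.2 (by omega)
    · rw [if_neg hc, if_pos hc'] at heq
      exfalso
      rw [heq] at ha
      exact absurd ha.2.2 (by omega)
    · rw [if_neg hc, if_neg hc'] at heq
      exact heq

lemma invLen_swap_gt (x : Equiv.Perm (Fin N)) {u v : Fin N} (huv : u < v)
    (hx : x v < x u) : invLen (x * Equiv.swap u v) < invLen x := by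
  have e1 : (x * Equiv.swap u v) u = x v := by rw [swap_apply]; simp
  have e2 : (x * Equiv.swap u v) v = x u := by rw [swap_apply]; simp [huv.ne']
  have := invLen_swap_lt (x * Equiv.swap u v) huv (by rw [e1, e2]; exact hx)
  rwa [mul_assoc, Equiv.swap_mul_self, mul_one] at this

/-- normalized form of a Bruhat step -/
lemma step_normalize {x b : Equiv.Perm (Fin N)}
    (h : invLen x < invLen b ∧ ∃ u v : Fin N, u ≠ v ∧ b = x * Equiv.swap u v) :
    ∃ u v : Fin N, u < v ∧ x u < x v ∧ b = x * Equiv.swap u v := by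
  obtain ⟨hlen, u, v, huv, rfl⟩ := h
  rcases lt_or_gt_of_ne huv with h | h
  · refine ⟨u, v, h, ?_, rfl⟩
    rcases lt_trichotomy (x u) (x v) with h2 | h2 | h2
    · exact h2
    · exact absurd (x.injective h2) huv
    · exact absurd hlen (not_lt_of_gt (invLen_swap_gt x h h2))
  · have hsc : Equiv.swap u v = Equiv.swap v u := Equiv.swap_comm u v
    refine ⟨v, u, h, ?_, by rw [hsc]⟩
    rcases lt_trichotomy (x v) (x u) with h2 | h2 | h2
    · exact h2
    · exact absurd (x.injective h2) huv.symm
    · rw [hsc] at hlen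
      exact absurd hlen (not_lt_of_gt (invLen_swap_gt x h h2))

lemma bruhatLE_rnk_mono {x y : Equiv.Perm (Fin N)} (h : bruhatLE x y) :
    ∀ p q, rnk x p q ≤ rnk y p q := by
  induction h with
  | refl => intro p q; exact le_refl _
  | tail _ hstep ih =>
    intro p q
    obtain ⟨u, v, huv, hx, rfl⟩ := step_normalize hstep
    exact le_trans (ih p q) (rnk_le_swap _ huv hx p q)

lemma bruhatLE_invLen {x y : Equiv.Perm (Fin N)} (h : bruhatLE x y) :
    x = y ∨ invLen x < invLen y := by
  induction h with
  | refl => exact Or.inl rfl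
  | tail _ hstep ih =>
    rcases ih with rfl | h
    · exact Or.inr hstep.1
    · exact Or.inr (lt_trans h hstep.1)

lemma bruhatLE_antisymm {x y : Equiv.Perm (Fin N)} (h1 : bruhatLE x y) (h2 : bruhatLE y x) :
    x = y := by
  rcases bruhatLE_invLen h1 with h | h
  · exact h
  · rcases bruhatLE_invLen h2 with h' | h'
    · exact h'.symm
    · omega

end BCR

-- Part 3: Ehresmann criterion
namespace BCR
variable {N : ℕ}

lemma rnk_swap_box (x : Equiv.Perm (Fin N)) {u v : Fin N} (huv : u < v)
    (hx : x u < x v) (p q : ℕ) :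
    rnk (x * Equiv.swap u v) p q =
      if u.val < p ∧ p ≤ v.val ∧ (x u).val < q ∧ q ≤ (x v).val
      then rnk x p q + 1 else rnk x p q := by
  set b := x * Equiv.swap u v with hbdef
  have hbu : b u = x v := by rw [hbdef, swap_apply]; simp
  have hbv : b v = x u := by rw [hbdef, swap_apply]; simp [huv.ne']
  have hbo : ∀ a : Fin N, a ≠ u → a ≠ v → b a = x a := by
    intro a h1 h2; rw [hbdef, swap_apply]; simp [h1, h2]
  have huvv : u.val < v.val := huv
  have hxuv : (x u).val < (x v).val := hx
  rcases le_or_gt p u.val with hp | hp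
  · -- p ≤ u
    rw [if_neg (by omega)]
    exact cnt_congr b x 0 p q fun a _ ha => hbo a (fun h => by omega) (fun h => by omega)
  rcases le_or_gt p v.val with hp2 | hp2
  · -- u < p ≤ v
    have e1 : ∀ w : Equiv.Perm (Fin N), rnk w p q
        = cnt w 0 u.val q + (cnt w u.val (u.val+1) q + cnt w (u.val+1) p q) := by
      intro w
      have a1 : cnt w 0 p q = cnt w 0 u.val q + cnt w u.val p q :=
        cnt_split w (Nat.zero_le _) (by omega) q
      have a2 : cnt w u.val p q = cnt w u.val (u.val+1) q + cnt w (u.val+1) p q :=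
        cnt_split w (by omega) (by omega) q
      rw [rnk, a1, a2]
    have hmid : cnt b (u.val+1) p q = cnt x (u.val+1) p q :=
      cnt_congr b x _ _ q fun a h1 h2 => hbo a (fun h => by omega) (fun h => by omega)
    have h0 : cnt b 0 u.val q = cnt x 0 u.val q :=
      cnt_congr b x _ _ q fun a h1 h2 => hbo a (fun h => by omega) (fun h => by omega)
    have hu1 : cnt b u.val (u.val+1) q = if q ≤ (x v).val then 1 else 0 := by
      rw [cnt_single b u q, hbu]
    have hu2 : cnt x u.val (u.val+1) q = if q ≤ (x u).val then 1 else 0 := cnt_single x u q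
    rw [e1 b, e1 x, hmid, h0, hu1, hu2]
    split_ifs <;> omega
  · -- v < p
    rw [if_neg (by omega)]
    have e1 : ∀ w : Equiv.Perm (Fin N), rnk w p q
        = cnt w 0 u.val q + (cnt w u.val (u.val+1) q + (cnt w (u.val+1) v.val q
          + (cnt w v.val (v.val+1) q + cnt w (v.val+1) p q))) := by
      intro w
      have a1 : cnt w 0 p q = cnt w 0 u.val q + cnt w u.val p q :=
        cnt_split w (Nat.zero_le _) (by omega) q
      have a2 : cnt w u.val p q = cnt w u.val (u.val+1) q + cnt w (u.val+1) p q :=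
        cnt_split w (by omega) (by omega) q
      have a3 : cnt w (u.val+1) p q = cnt w (u.val+1) v.val q + cnt w v.val p q :=
        cnt_split w (by omega) (by omega) q
      have a4 : cnt w v.val p q = cnt w v.val (v.val+1) q + cnt w (v.val+1) p q :=
        cnt_split w (by omega) (by omega) q
      rw [rnk, a1, a2, a3, a4]
    have c0 : cnt b 0 u.val q = cnt x 0 u.val q :=
      cnt_congr b x _ _ q fun a h1 h2 => hbo a (fun h => by omega) (fun h => by omega)
    have c1 : cnt b (u.val+1) v.val q = cnt x (u.val+1) v.val q :=
      cnt_congr b x _ _ q fun a h1 h2 => hbo a (fun h => by omega) (fun h => by omega)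
    have c2 : cnt b (v.val+1) p q = cnt x (v.val+1) p q :=
      cnt_congr b x _ _ q fun a h1 h2 => hbo a (fun h => by omega) (fun h => by omega)
    have s1 : cnt b u.val (u.val+1) q = if q ≤ (x v).val then 1 else 0 := by
      rw [cnt_single b u q, hbu]
    have s2 : cnt b v.val (v.val+1) q = if q ≤ (x u).val then 1 else 0 := by
      rw [cnt_single b v q, hbv]
    have s3 : cnt x u.val (u.val+1) q = if q ≤ (x u).val then 1 else 0 := cnt_single x u q
    have s4 : cnt x v.val (v.val+1) q = if q ≤ (x v).val then 1 else 0 := cnt_single x v q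
    rw [e1 b, e1 x, c0, c1, c2, s1, s2, s3, s4]
    split_ifs <;> omega

/-- The measure used for induction. -/
def meas (y x : Equiv.Perm (Fin N)) : ℕ :=
  ∑ p ∈ Finset.range (N+1), ∑ q ∈ Finset.range (N+1), (rnk y p q - rnk x p q)

/-- Rank function determines the permutation, bounded version. -/
lemma rnk_inj' {x y : Equiv.Perm (Fin N)}
    (h : ∀ p q, p ≤ N → q ≤ N → rnk x p q = rnk y p q) : x = y := by
  apply Equiv.ext
  intro a
  have key : ∀ q, q ≤ N → (q ≤ (x a).val ↔ q ≤ (y a).val) := by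
    intro q hq
    have h1 := rnk_succ x a q
    have h2 := rnk_succ y a q
    have e1 : rnk x (a.val + 1) q = rnk y (a.val + 1) q := h _ _ (by omega) hq
    have e2 : rnk x a.val q = rnk y a.val q := h _ _ (by omega) hq
    rw [e1, e2] at h1
    rw [h1] at h2
    constructor
    · intro hh
      by_contra hh'
      rw [if_pos hh, if_neg hh'] at h2
      omega
    · intro hh
      by_contra hh'
      rw [if_neg hh', if_pos hh] at h2
      omega
  have h1 := (key (x a).val (by omega)).mp (le_refl _)
  have h2 := (key (y a).val (by omega)).mpr (le_refl _)
  exact Fin.ext (le_antisymm h1 h2)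

lemma ehresmann_hard {x y : Equiv.Perm (Fin N)} (h : ∀ p q, rnk x p q ≤ rnk y p q) :
    bruhatLE x y := by
  suffices H : ∀ n (x : Equiv.Perm (Fin N)), meas y x ≤ n →
      (∀ p q, rnk x p q ≤ rnk y p q) → bruhatLE x y from H (meas y x) x (le_refl _) h
  intro n
  induction n with
  | zero =>
    intro x hm hx
    have hz : ∀ p ∈ Finset.range (N+1), ∀ q ∈ Finset.range (N+1),
        rnk y p q - rnk x p q = 0 := by
      intro p hp q hq
      have h1 : (∑ p ∈ Finset.range (N+1), ∑ q ∈ Finset.range (N+1),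
          (rnk y p q - rnk x p q)) = 0 := Nat.le_zero.mp hm
      rw [Finset.sum_eq_zero_iff] at h1
      have h2 := h1 p hp
      rw [Finset.sum_eq_zero_iff] at h2
      exact h2 q hq
    have : x = y := by
      apply rnk_inj'
      intro p q hp hq
      have := hz p (Finset.mem_range.mpr (by omega)) q (Finset.mem_range.mpr (by omega))
      have := hx p q
      omega
    rw [this]
    exact Relation.ReflTransGen.refl
  | succ n ih =>
    intro x hm hx
    by_cases hxy : x = y
    · rw [hxy]
      exact Relation.ReflTransGen.refl
    push_neg at hxy
    -- the first position where x and y differ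
    have hdifne : (Finset.univ.filter fun a : Fin N => x a ≠ y a).Nonempty := by
      by_contra hh
      rw [Finset.not_nonempty_iff_eq_empty, Finset.filter_eq_empty_iff] at hh
      exact hxy (Equiv.ext fun a => not_not.mp (hh (Finset.mem_univ a)))
    set i := (Finset.univ.filter fun a : Fin N => x a ≠ y a).min' hdifne with hidef
    have hxi : x i ≠ y i := by
      have := Finset.min'_mem _ hdifne
      rw [← hidef] at this
      exact (Finset.mem_filter.mp this).2
    have hagree : ∀ a : Fin N, a.val < i.val → x a = y a := by
      intro a ha
      by_contra hh
      have : i ≤ a := Finset.min'_le _ a (Finset.mem_filter.mpr ⟨Finset.mem_univ a, hh⟩)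
      have : i.val ≤ a.val := this
      omega
    have hA : ∀ r, rnk x i.val r = rnk y i.val r := fun r =>
      cnt_congr x y 0 i.val r fun a _ ha => hagree a ha
    have hxiyi : (x i).val < (y i).val := by
      rcases lt_trichotomy (x i).val (y i).val with hh | hh | hh
      · exact hh
      · exact absurd (Fin.ext hh) hxi
      · exfalso
        have e1 := rnk_succ x i (x i).val
        have e2 := rnk_succ y i (x i).val
        rw [if_pos (le_refl _)] at e1
        rw [if_neg (by omega)] at e2
        have := hx (i.val + 1) (x i).val
        have := hA (x i).val
        omega
    -- the minimal j
    have hk0 : (x.symm (y i)) ∈ Finset.univ.filter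
        (fun k : Fin N => i < k ∧ x i < x k ∧ (x k).val ≤ (y i).val) := by
      have hxk0 : x (x.symm (y i)) = y i := x.apply_symm_apply _
      have hne : i ≠ x.symm (y i) := by
        intro hh
        rw [← hh] at hxk0
        exact hxi hxk0
      have hlt : i < x.symm (y i) := by
        rcases lt_trichotomy i (x.symm (y i)) with hh | hh | hh
        · exact hh
        · exact absurd hh hne
        · exfalso
          have := hagree _ (Fin.lt_def.mp hh)
          rw [hxk0] at this
          exact hne (y.injective this)
      refine Finset.mem_filter.mpr ⟨Finset.mem_univ _, hlt, ?_, ?_⟩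
      · rw [hxk0]
        exact Fin.lt_def.mpr hxiyi
      · rw [hxk0]
    have hJne : (Finset.univ.filter
        (fun k : Fin N => i < k ∧ x i < x k ∧ (x k).val ≤ (y i).val)).Nonempty :=
      ⟨_, hk0⟩
    set j := (Finset.univ.filter
      (fun k : Fin N => i < k ∧ x i < x k ∧ (x k).val ≤ (y i).val)).min' hJne with hjdef
    have hjmem := Finset.min'_mem _ hJne
    rw [← hjdef] at hjmem
    rw [Finset.mem_filter] at hjmem
    obtain ⟨-, hij, hxij, hxjyi⟩ := hjmem
    have hjmin : ∀ k : Fin N, i < k → k < j →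
        ¬(x i < x k ∧ (x k).val ≤ (y i).val) := by
      intro k hik hkj hh
      have : j ≤ k := Finset.min'_le _ k
        (Finset.mem_filter.mpr ⟨Finset.mem_univ _, hik, hh.1, hh.2⟩)
      exact absurd hkj (not_lt.mpr this)
    -- the key strict inequality inside the box
    have hkey : ∀ p q, i.val < p → p ≤ j.val → (x i).val < q → q ≤ (x j).val →
        rnk x p q < rnk y p q := by
      intro p q hp1 hp2 hq1 hq2
      have hq3 : q ≤ (y i).val := le_trans hq2 hxjyi
      have esplit : ∀ (w : Equiv.Perm (Fin N)) (r : ℕ), rnk w p r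
          = rnk w i.val r + (cnt w i.val (i.val+1) r + cnt w (i.val+1) p r) := by
        intro w r
        have a1 : rnk w p r = rnk w i.val r + cnt w i.val p r :=
          rnk_split w (by omega) r
        have a2 : cnt w i.val p r = cnt w i.val (i.val+1) r + cnt w (i.val+1) p r :=
          cnt_split w (by omega) (by omega) r
        rw [a1, a2]
      -- B ≤ B'
      have hBB' : cnt x (i.val+1) p q ≤ cnt x (i.val+1) p ((y i).val + 1) := by
        apply Finset.card_le_card
        intro a ha
        simp only [Finset.mem_filter, Finset.mem_univ, true_and] at ha ⊢
        refine ⟨ha.1, ha.2.1, ?_⟩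
        have hik : i < a := Fin.lt_def.mpr (by omega)
        have hkj : a < j := Fin.lt_def.mpr (by omega)
        have := hjmin a hik hkj
        have hxia : x i < x a := Fin.lt_def.mpr (by omega)
        by_contra hcon
        exact this ⟨hxia, by omega⟩
      -- B' ≤ C' from the hypothesis at (p, y i + 1)
      have hBC : cnt x (i.val+1) p ((y i).val + 1) ≤ cnt y (i.val+1) p ((y i).val + 1) := by
        have h1 := hx p ((y i).val + 1)
        rw [esplit x, esplit y] at h1
        rw [cnt_single x i, cnt_single y i, if_neg (by omega), if_neg (by omega)] at h1
        have := hA ((y i).val + 1)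
        omega
      have hCC : cnt y (i.val+1) p ((y i).val + 1) ≤ cnt y (i.val+1) p q :=
        cnt_anti y _ _ (by omega)
      have e1 := esplit x q
      have e2 := esplit y q
      rw [cnt_single x i, if_neg (by omega)] at e1
      rw [cnt_single y i, if_pos (by omega)] at e2
      have := hA q
      omega
    set x' := x * Equiv.swap i j with hx'def
    have box := rnk_swap_box x hij hxij
    have hx'le : ∀ p q, rnk x' p q ≤ rnk y p q := by
      intro p q
      rw [← hx'def] at box
      rw [box p q]
      split_ifs with hb
      · exact hkey p q hb.1 hb.2.1 hb.2.2.1 hb.2.2.2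
      · exact hx p q
    have hmono : ∀ p q, rnk x p q ≤ rnk x' p q := by
      intro p q
      rw [← hx'def] at box
      rw [box p q]
      split_ifs <;> omega
    -- strict decrease of the measure at (i.val+1, (x i).val+1)
    have hstrict : rnk y (i.val+1) ((x i).val+1) - rnk x' (i.val+1) ((x i).val+1)
        < rnk y (i.val+1) ((x i).val+1) - rnk x (i.val+1) ((x i).val+1) := by
      rw [← hx'def] at box
      have hb := box (i.val+1) ((x i).val+1)
      rw [if_pos ⟨by omega, by omega, by omega, Fin.lt_def.mp hxij⟩] at hb
      have := hkey (i.val+1) ((x i).val+1) (by omega) (by omega) (by omega)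
        (Fin.lt_def.mp hxij)
      omega
    have hmeas : meas y x' < meas y x := by
      rw [meas, meas]
      apply Finset.sum_lt_sum
      · intro p _
        apply Finset.sum_le_sum
        intro q _
        exact Nat.sub_le_sub_left (hmono p q) _
      · refine ⟨i.val + 1, Finset.mem_range.mpr (by omega), ?_⟩
        apply Finset.sum_lt_sum
        · intro q _
          exact Nat.sub_le_sub_left (hmono _ q) _
        · exact ⟨(x i).val + 1, Finset.mem_range.mpr (by omega), hstrict⟩
    have hstep : invLen x < invLen x' ∧ ∃ u v : Fin N, u ≠ v ∧ x' = x * Equiv.swap u v :=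
      ⟨invLen_swap_lt x hij hxij, i, j, ne_of_lt hij, rfl⟩
    exact Relation.ReflTransGen.head hstep (ih x' (by omega) hx'le)

/-- Ehresmann's criterion for the strong Bruhat order. -/
theorem bruhatLE_iff_rnk {x y : Equiv.Perm (Fin N)} :
    bruhatLE x y ↔ ∀ p q, rnk x p q ≤ rnk y p q :=
  ⟨bruhatLE_rnk_mono, ehresmann_hard⟩

end BCR

-- Part 5: enumeration of finsets by counts
namespace BCR
variable {n : ℕ}

def idx (s : Finset (Fin n)) (a : Fin n) : ℕ := (s.filter (fun b => b < a)).card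

lemma idx_lt_card {s : Finset (Fin n)} {a : Fin n} (ha : a ∈ s) : idx s a < s.card := by
  have : s.filter (fun b => b < a) ⊆ s.erase a := by
    intro b hb
    rw [Finset.mem_filter] at hb
    exact Finset.mem_erase.mpr ⟨ne_of_lt hb.2, hb.1⟩
  calc idx s a ≤ (s.erase a).card := Finset.card_le_card this
    _ < s.card := Finset.card_erase_lt_of_mem ha

lemma idx_strictMono {s : Finset (Fin n)} {a b : Fin n} (ha : a ∈ s) (hab : a < b) :
    idx s a < idx s b := by
  have h1 : insert a (s.filter (fun c => c < a)) ⊆ s.filter (fun c => c < b) := by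
    intro c hc
    rw [Finset.mem_insert] at hc
    rcases hc with rfl | hc
    · exact Finset.mem_filter.mpr ⟨ha, hab⟩
    · rw [Finset.mem_filter] at hc ⊢
      exact ⟨hc.1, lt_trans hc.2 hab⟩
  have h2 : a ∉ s.filter (fun c => c < a) := by
    rw [Finset.mem_filter]
    rintro ⟨-, h⟩
    exact lt_irrefl a h
  calc idx s a = (s.filter (fun c => c < a)).card := rfl
    _ < (insert a (s.filter (fun c => c < a))).card := by
        rw [Finset.card_insert_of_notMem h2]; omega
    _ ≤ _ := Finset.card_le_card h1

lemma idx_inj {s : Finset (Fin n)} {a b : Fin n} (ha : a ∈ s) (hb : b ∈ s)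
    (h : idx s a = idx s b) : a = b := by
  rcases lt_trichotomy a b with hh | hh | hh
  · exact absurd h (ne_of_lt (idx_strictMono ha hh))
  · exact hh
  · exact absurd h.symm (ne_of_lt (idx_strictMono hb hh))

lemma idx_surj (s : Finset (Fin n)) : ∀ r, r < s.card → ∃ a ∈ s, idx s a = r := by
  induction s using Finset.strongInductionOn with
  | _ s ih =>
    intro r hr
    have hne : s.Nonempty := Finset.card_pos.mp (by omega)
    set M := s.max' hne with hMdef
    have hMmem : M ∈ s := s.max'_mem hne
    have hM : idx s M = s.card - 1 := by
      have he : s.filter (fun b => b < M) = s.erase M := by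
        ext b
        rw [Finset.mem_filter, Finset.mem_erase]
        constructor
        · rintro ⟨h1, h2⟩; exact ⟨ne_of_lt h2, h1⟩
        · rintro ⟨h1, h2⟩
          exact ⟨h2, lt_of_le_of_ne (s.le_max' b h2) h1⟩
      rw [idx, he, Finset.card_erase_of_mem hMmem]
    rcases eq_or_lt_of_le (by omega : r ≤ s.card - 1) with heq | hlt
    · exact ⟨M, hMmem, by rw [hM, ← heq]⟩
    · have hsub : s.erase M ⊂ s := Finset.erase_ssubset hMmem
      have hcard : (s.erase M).card = s.card - 1 := Finset.card_erase_of_mem hMmem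
      obtain ⟨a, ha, hia⟩ := ih (s.erase M) hsub r (by omega)
      refine ⟨a, (Finset.mem_erase.mp ha).2, ?_⟩
      rw [← hia, idx, idx]
      congr 1
      rw [Finset.filter_erase]
      rw [Finset.erase_eq_of_notMem]
      rw [Finset.mem_filter]
      rintro ⟨-, hMa⟩
      have : a ≤ M := s.le_max' a (Finset.mem_erase.mp ha).2
      exact absurd hMa (not_lt.mpr this)

lemma idx_count (s : Finset (Fin n)) (t : ℕ) :
    (s.filter (fun a => idx s a < t)).card = min t s.card := by
  rw [← Finset.card_range (min t s.card)]
  apply Finset.card_bij (fun a _ => idx s a)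
  · intro a ha
    rw [Finset.mem_filter] at ha
    rw [Finset.mem_range]
    exact lt_min ha.2 (idx_lt_card ha.1)
  · intro a ha b hb h
    rw [Finset.mem_filter] at ha hb
    exact idx_inj ha.1 hb.1 h
  · intro r hr
    rw [Finset.mem_range] at hr
    obtain ⟨a, ha, hia⟩ := idx_surj s r (lt_of_lt_of_le hr (min_le_right _ _))
    exact ⟨a, Finset.mem_filter.mpr ⟨ha, hia ▸ lt_of_lt_of_le hr (min_le_left _ _)⟩, hia⟩

/-- the element of `s` whose index is `r` -/
noncomputable def nth [NeZero n] (s : Finset (Fin n)) (r : ℕ) : Fin n :=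
  if h : r < s.card then (idx_surj s r h).choose else ⟨0, Nat.pos_of_ne_zero (NeZero.ne n)⟩

lemma nth_spec [NeZero n] {s : Finset (Fin n)} {r : ℕ} (h : r < s.card) :
    nth s r ∈ s ∧ idx s (nth s r) = r := by
  rw [nth, dif_pos h]
  exact ⟨(idx_surj s r h).choose_spec.1, (idx_surj s r h).choose_spec.2⟩

/-- `a.val < p` iff the index of `a` is below the count of elements `< p`. -/
lemma idx_lt_iff {s : Finset (Fin n)} {a : Fin n} (ha : a ∈ s) (p : ℕ) :
    a.val < p ↔ idx s a < (s.filter (fun b => b.val < p)).card := by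
  constructor
  · intro h
    have hsub : s.filter (fun b => b < a) ⊆ (s.filter (fun b => b.val < p)).erase a := by
      intro b hb
      rw [Finset.mem_filter] at hb
      rw [Finset.mem_erase, Finset.mem_filter]
      have : b.val < a.val := hb.2
      exact ⟨ne_of_lt hb.2, hb.1, by omega⟩
    calc idx s a ≤ ((s.filter (fun b => b.val < p)).erase a).card := Finset.card_le_card hsub
      _ < (s.filter (fun b => b.val < p)).card :=
        Finset.card_erase_lt_of_mem (Finset.mem_filter.mpr ⟨ha, h⟩)
  · intro h
    by_contra hh
    push_neg at hh
    have hsub : s.filter (fun b => b.val < p) ⊆ s.filter (fun b => b < a) := by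
      intro b hb
      rw [Finset.mem_filter] at hb ⊢
      refine ⟨hb.1, ?_⟩
      have : b.val < p := hb.2
      exact Fin.lt_def.mpr (by omega)
    exact absurd h (not_lt.mpr (Finset.card_le_card hsub))

/-- `q ≤ a.val` iff the index of `a` is at least `card − (count of elements ≥ q)`. -/
lemma idx_ge_iff {s : Finset (Fin n)} {a : Fin n} (ha : a ∈ s) (q : ℕ) :
    q ≤ a.val ↔ s.card - (s.filter (fun b => q ≤ b.val)).card ≤ idx s a := by
  have hs : (s.filter (fun b => q ≤ b.val)).card
      + (s.filter (fun b => ¬ q ≤ b.val)).card = s.card :=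
    Finset.card_filter_add_card_filter_not (s := s) (p := fun b => q ≤ b.val)
  constructor
  · intro h
    have hsub : s.filter (fun b => ¬ q ≤ b.val) ⊆ s.filter (fun b => b < a) := by
      intro b hb
      rw [Finset.mem_filter] at hb ⊢
      refine ⟨hb.1, Fin.lt_def.mpr ?_⟩
      have := hb.2
      omega
    have := Finset.card_le_card hsub
    rw [idx]
    omega
  · intro h
    by_contra hh
    push_neg at hh
    have hsub : insert a (s.filter (fun b => q ≤ b.val)) ⊆
        s.filter (fun b => ¬ (b < a)) := by
      intro b hb
      rw [Finset.mem_insert] at hb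
      rw [Finset.mem_filter]
      rcases hb with rfl | hb
      · exact ⟨ha, lt_irrefl _⟩
      · rw [Finset.mem_filter] at hb
        refine ⟨hb.1, ?_⟩
        rw [Fin.lt_def]
        have := hb.2
        omega
    have h2 : a ∉ s.filter (fun b => q ≤ b.val) := by
      rw [Finset.mem_filter]
      rintro ⟨-, hc⟩
      omega
    have h3 := Finset.card_le_card hsub
    rw [Finset.card_insert_of_notMem h2] at h3
    have h4 : (s.filter (fun b => b < a)).card
        + (s.filter (fun b => ¬ b < a)).card = s.card :=
      Finset.card_filter_add_card_filter_not (s := s) (p := fun b => b < a)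
    have h5 : idx s a = (s.filter (fun b => b < a)).card := rfl
    have := idx_lt_card ha
    omega

end BCR

namespace BCR
variable {m : ℕ}

lemma genI_isSwap : ∀ f ∈ genI m, Equiv.Perm.IsSwap f := by
  rintro f ⟨k, hk, rfl⟩
  exact ⟨_, _, by simp [Fin.ext_iff], rfl⟩

lemma WI_fixes {w : Equiv.Perm (Fin (2 * m + 1))} (hw : w ∈ WI m) :
    ∀ i : Fin (2 * m + 1), m < i.val → w i = i := by
  induction hw using Subgroup.closure_induction with
  | mem f hf =>
    obtain ⟨k, hk, rfl⟩ := hf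
    intro i hi
    apply Equiv.swap_apply_of_ne_of_ne <;>
      (intro h; rw [Fin.ext_iff] at h; simp at h; omega)
  | one => intro i _; rfl
  | mul f g _ _ hf hg =>
    intro i hi
    rw [Equiv.Perm.mul_apply, hg i hi, hf i hi]
  | inv f _ hf =>
    intro i hi
    have := hf i hi
    exact (Equiv.Perm.eq_inv_iff_eq.mpr this).symm

lemma orbit_zero {k : ℕ} (hk : k ≤ m) :
    (⟨k, by omega⟩ : Fin (2 * m + 1)) ∈
      MulAction.orbit (WI m) (⟨0, by omega⟩ : Fin (2 * m + 1)) := by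
  induction k with
  | zero => exact MulAction.mem_orbit_self _
  | succ k ih =>
    have hk' : k < m := hk
    obtain ⟨g, hg⟩ := ih (by omega)
    have hgen : Equiv.swap (⟨k, by omega⟩ : Fin (2 * m + 1)) ⟨k + 1, by omega⟩ ∈ WI m :=
      Subgroup.subset_closure ⟨k, hk', rfl⟩
    have hg' : g • (⟨0, by omega⟩ : Fin (2 * m + 1)) = ⟨k, by omega⟩ := hg
    refine ⟨(⟨_, hgen⟩ : WI m) * g, ?_⟩
    show ((⟨_, hgen⟩ : WI m) * g) • (⟨0, by omega⟩ : Fin (2 * m + 1)) = _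
    rw [mul_smul, hg']
    exact Equiv.swap_apply_left _ _

lemma orbit_small {a b : Fin (2 * m + 1)} (ha : a.val ≤ m) (hb : b.val ≤ m) :
    a ∈ MulAction.orbit (WI m) b := by
  have ea : a = ⟨a.val, by omega⟩ := Fin.ext rfl
  have eb : b = ⟨b.val, by omega⟩ := Fin.ext rfl
  have h1 : a ∈ MulAction.orbit (WI m) (⟨0, by omega⟩ : Fin (2 * m + 1)) := by
    rw [ea]; exact orbit_zero ha
  have h2 : b ∈ MulAction.orbit (WI m) (⟨0, by omega⟩ : Fin (2 * m + 1)) := by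
    rw [eb]; exact orbit_zero hb
  rw [← MulAction.orbit_eq_iff.mpr h2] at h1
  exact h1

lemma small_apply_small {w : Equiv.Perm (Fin (2 * m + 1))}
    (hw : ∀ i : Fin (2 * m + 1), m < i.val → w i = i) {a : Fin (2 * m + 1)}
    (ha : a.val ≤ m) : (w a).val ≤ m := by
  by_contra h
  push_neg at h
  have := hw (w a) h
  have : w a = a := w.injective this
  rw [this] at h
  omega

lemma mem_WI_iff {w : Equiv.Perm (Fin (2 * m + 1))} :
    w ∈ WI m ↔ ∀ i : Fin (2 * m + 1), m < i.val → w i = i := by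
  constructor
  · exact WI_fixes
  · intro hw
    rw [WI, mem_closure_isSwap genI_isSwap]
    refine ⟨Set.toFinite _, fun x => ?_⟩
    rcases le_or_gt x.val m with hx | hx
    · exact orbit_small (small_apply_small hw hx) hx
    · rw [hw x hx]
      exact MulAction.mem_orbit_self _

end BCR

namespace BCR
variable {m : ℕ}

def dset (σ : Rook m) : Finset (Fin m) := Finset.univ.filter (fun j => σ.1 j ≠ 0)

/-- free positions -/
def FP (σ : Rook m) : Finset (Fin (2*m+1)) :=
  Finset.univ.filter (fun i => i.val ≤ m ∨ ∀ j : Fin m, σ.1 j ≠ 0 → i.val ≠ m + 1 + j.val)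

/-- free values -/
def FV (σ : Rook m) : Finset (Fin (2*m+1)) :=
  Finset.univ.filter (fun v => v.val ≤ m ∨ ∀ j : Fin m, σ.1 j ≠ v.val - m)

lemma mem_FP_small {σ : Rook m} {i : Fin (2*m+1)} (h : i.val ≤ m) : i ∈ FP σ :=
  Finset.mem_filter.mpr ⟨Finset.mem_univ i, Or.inl h⟩

lemma mem_FV_small {σ : Rook m} {v : Fin (2*m+1)} (h : v.val ≤ m) : v ∈ FV σ :=
  Finset.mem_filter.mpr ⟨Finset.mem_univ v, Or.inl h⟩

lemma not_mem_FP_iff {σ : Rook m} {i : Fin (2*m+1)} :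
    i ∉ FP σ ↔ ∃ j : Fin m, σ.1 j ≠ 0 ∧ i.val = m + 1 + j.val := by
  rw [FP, Finset.mem_filter]
  constructor
  · intro h
    push_neg at h
    obtain ⟨hm, j, hj1, hj2⟩ := h (Finset.mem_univ i)
    exact ⟨j, hj1, hj2⟩
  · rintro ⟨j, hj1, hj2⟩ ⟨-, h | h⟩
    · omega
    · exact h j hj1 hj2

lemma not_mem_FV_iff {σ : Rook m} {v : Fin (2*m+1)} :
    v ∉ FV σ ↔ ∃ j : Fin m, σ.1 j ≠ 0 ∧ v.val = m + σ.1 j := by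
  rw [FV, Finset.mem_filter]
  constructor
  · intro h
    push_neg at h
    obtain ⟨hm, j, hj⟩ := h (Finset.mem_univ v)
    refine ⟨j, ?_, by omega⟩
    omega
  · rintro ⟨j, hj1, hj2⟩ ⟨-, h | h⟩
    · omega
    · exact h j (by omega)

lemma card_univ_fin : (Finset.univ : Finset (Fin (2*m+1))).card = 2*m+1 := by
  rw [Finset.card_univ, Fintype.card_fin]

lemma FP_compl_card (σ : Rook m) :
    ((Finset.univ : Finset (Fin (2*m+1))) \ FP σ).card = (dset σ).card := by
  symm
  apply Finset.card_bij (fun j _ => (⟨m+1+j.val, by omega⟩ : Fin (2*m+1)))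
  · intro j hj
    rw [dset, Finset.mem_filter] at hj
    rw [Finset.mem_sdiff]
    exact ⟨Finset.mem_univ _, not_mem_FP_iff.mpr ⟨j, hj.2, rfl⟩⟩
  · intro j _ j' _ h
    rw [Fin.mk.injEq] at h
    exact Fin.ext (by omega)
  · intro i hi
    rw [Finset.mem_sdiff] at hi
    obtain ⟨j, hj1, hj2⟩ := not_mem_FP_iff.mp hi.2
    exact ⟨j, Finset.mem_filter.mpr ⟨Finset.mem_univ _, hj1⟩,
      Fin.ext (by show m+1+j.val = i.val; omega)⟩

lemma FV_compl_card (σ : Rook m) :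
    ((Finset.univ : Finset (Fin (2*m+1))) \ FV σ).card = (dset σ).card := by
  symm
  apply Finset.card_bij (fun j _ =>
    (⟨m + σ.1 j, by have := σ.2.1 j; omega⟩ : Fin (2*m+1)))
  · intro j hj
    rw [dset, Finset.mem_filter] at hj
    rw [Finset.mem_sdiff]
    exact ⟨Finset.mem_univ _, not_mem_FV_iff.mpr ⟨j, hj.2, rfl⟩⟩
  · intro j hj j' hj' h
    rw [dset, Finset.mem_filter] at hj hj'
    rw [Fin.mk.injEq] at h
    exact σ.2.2 j j' hj.2 (by omega)
  · intro v hv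
    rw [Finset.mem_sdiff] at hv
    obtain ⟨j, hj1, hj2⟩ := not_mem_FV_iff.mp hv.2
    exact ⟨j, Finset.mem_filter.mpr ⟨Finset.mem_univ _, hj1⟩,
      Fin.ext (by show m + σ.1 j = v.val; omega)⟩

lemma FP_card (σ : Rook m) : (FP σ).card = 2*m+1 - (dset σ).card := by
  have h1 := Finset.card_sdiff_of_subset (Finset.subset_univ (FP σ))
  have h2 := FP_compl_card σ
  have h3 : (FP σ).card ≤ 2*m+1 := by
    have := Finset.card_le_card (Finset.subset_univ (FP σ))
    rwa [card_univ_fin] at this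
  rw [card_univ_fin] at h1
  omega

lemma FV_card (σ : Rook m) : (FV σ).card = 2*m+1 - (dset σ).card := by
  have h1 := Finset.card_sdiff_of_subset (Finset.subset_univ (FV σ))
  have h2 := FV_compl_card σ
  have h3 : (FV σ).card ≤ 2*m+1 := by
    have := Finset.card_le_card (Finset.subset_univ (FV σ))
    rwa [card_univ_fin] at this
  rw [card_univ_fin] at h1
  omega

lemma dset_card_le (σ : Rook m) : (dset σ).card ≤ m := by
  calc (dset σ).card ≤ (Finset.univ : Finset (Fin m)).card := Finset.card_le_univ _
    _ = m := by rw [Finset.card_univ, Fintype.card_fin]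

lemma FP_card_eq_FV_card (σ : Rook m) : (FP σ).card = (FV σ).card := by
  rw [FP_card, FV_card]

/-- the representative permutation, as a function -/
noncomputable def gfun (σ : Rook m) (i : Fin (2*m+1)) : Fin (2*m+1) :=
  if h : i ∈ FP σ then nth (FV σ) ((FV σ).card - 1 - idx (FP σ) i)
  else
    have h1 : m < i.val := by
      by_contra hc
      exact h (mem_FP_small (not_lt.mp hc))
    ⟨m + σ.1 ⟨i.val - (m+1), by have := i.isLt; omega⟩,
      by have := σ.2.1 ⟨i.val - (m+1), by have := i.isLt; omega⟩; omega⟩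

lemma gfun_free {σ : Rook m} {i : Fin (2*m+1)} (h : i ∈ FP σ) :
    gfun σ i ∈ FV σ ∧ idx (FV σ) (gfun σ i) = (FV σ).card - 1 - idx (FP σ) i := by
  have hc : (FV σ).card - 1 - idx (FP σ) i < (FV σ).card := by
    have h1 : (FP σ).Nonempty := ⟨i, h⟩
    have h2 : 0 < (FP σ).card := Finset.card_pos.mpr h1
    have h3 := FP_card_eq_FV_card σ
    omega
  rw [gfun, dif_pos h]
  exact nth_spec hc

lemma gfun_forced_val (σ : Rook m) {i : Fin (2*m+1)} (j : Fin m) (hj : σ.1 j ≠ 0)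
    (hi : i.val = m + 1 + j.val) : (gfun σ i).val = m + σ.1 j := by
  have h : i ∉ FP σ := not_mem_FP_iff.mpr ⟨j, hj, hi⟩
  rw [gfun, dif_neg h]
  exact congrArg (fun t : Fin m => m + σ.1 t)
    (Fin.ext (by show i.val - (m+1) = j.val; omega))

lemma gfun_inj (σ : Rook m) : Function.Injective (gfun σ) := by
  intro a b hab
  by_cases ha : a ∈ FP σ <;> by_cases hb : b ∈ FP σ
  · obtain ⟨hm1, hi1⟩ := gfun_free ha
    obtain ⟨hm2, hi2⟩ := gfun_free hb
    rw [hab] at hi1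
    have h1 : idx (FP σ) a < (FP σ).card := idx_lt_card ha
    have h2 : idx (FP σ) b < (FP σ).card := idx_lt_card hb
    have h3 := FP_card_eq_FV_card σ
    have : idx (FP σ) a = idx (FP σ) b := by omega
    exact idx_inj ha hb this
  · exfalso
    obtain ⟨j, hj1, hj2⟩ := not_mem_FP_iff.mp hb
    have hv : (gfun σ b).val = m + σ.1 j := gfun_forced_val σ j hj1 hj2
    have := (gfun_free ha).1
    rw [hab] at this
    exact absurd this (not_mem_FV_iff.mpr ⟨j, hj1, hv⟩)
  · exfalso
    obtain ⟨j, hj1, hj2⟩ := not_mem_FP_iff.mp ha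
    have hv : (gfun σ a).val = m + σ.1 j := gfun_forced_val σ j hj1 hj2
    have := (gfun_free hb).1
    rw [← hab] at this
    exact absurd this (not_mem_FV_iff.mpr ⟨j, hj1, hv⟩)
  · obtain ⟨j, hj1, hj2⟩ := not_mem_FP_iff.mp ha
    obtain ⟨j', hj1', hj2'⟩ := not_mem_FP_iff.mp hb
    have hv : (gfun σ a).val = m + σ.1 j := gfun_forced_val σ j hj1 hj2
    have hv' : (gfun σ b).val = m + σ.1 j' := gfun_forced_val σ j' hj1' hj2'
    rw [hab] at hv
    have : j = j' := σ.2.2 j j' hj1 (by omega)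
    apply Fin.ext
    rw [hj2, hj2', this]

/-- the representative permutation -/
noncomputable def gperm (σ : Rook m) : Equiv.Perm (Fin (2*m+1)) :=
  Equiv.ofBijective (gfun σ) (Finite.injective_iff_bijective.mp (gfun_inj σ))

lemma gperm_apply (σ : Rook m) (i : Fin (2*m+1)) : gperm σ i = gfun σ i := rfl

/-- counting quantities -/
def c1 (σ : Rook m) (p : ℕ) : ℕ := ((FP σ).filter (fun a => a.val < p)).card
def c2 (σ : Rook m) (q : ℕ) : ℕ := ((FV σ).filter (fun v => q ≤ v.val)).card
def bigc (σ : Rook m) (p q : ℕ) : ℕ :=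
  ((dset σ).filter (fun j => m+1+j.val < p ∧ q ≤ m + σ.1 j)).card

lemma gfun_free_ge_iff {σ : Rook m} {a : Fin (2*m+1)} (ha : a ∈ FP σ) (q : ℕ) :
    q ≤ (gfun σ a).val ↔ idx (FP σ) a < c2 σ q := by
  obtain ⟨hm, hi⟩ := gfun_free ha
  rw [idx_ge_iff hm q, hi]
  have h1 : idx (FP σ) a < (FP σ).card := idx_lt_card ha
  have h2 := FP_card_eq_FV_card σ
  have h3 : c2 σ q ≤ (FV σ).card := Finset.card_le_card (Finset.filter_subset _ _)
  rw [c2]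
  omega

/-- first half of the rank formula: the contribution of forced positions. -/
lemma rnk_gperm (σ : Rook m) (p q : ℕ) :
    rnk (gperm σ) p q = bigc σ p q + min (c1 σ p) (c2 σ q) := by
  have hsplit : (Finset.univ.filter
      (fun a : Fin (2*m+1) => a.val < p ∧ q ≤ ((gperm σ) a).val))
      = ((FP σ).filter (fun a => a.val < p ∧ q ≤ (gfun σ a).val))
        ∪ ((Finset.univ \ FP σ).filter (fun a => a.val < p ∧ q ≤ (gfun σ a).val)) := by
    rw [← Finset.filter_union, Finset.union_sdiff_of_subset (Finset.subset_univ _)]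
    rfl
  have hdisj : Disjoint ((FP σ).filter (fun a => a.val < p ∧ q ≤ (gfun σ a).val))
      ((Finset.univ \ FP σ).filter (fun a => a.val < p ∧ q ≤ (gfun σ a).val)) := by
    apply Finset.disjoint_filter_filter
    exact Finset.disjoint_sdiff
  rw [rnk, cnt]
  have : (Finset.univ.filter
      (fun a : Fin (2*m+1) => 0 ≤ a.val ∧ a.val < p ∧ q ≤ ((gperm σ) a).val))
      = (Finset.univ.filter
      (fun a : Fin (2*m+1) => a.val < p ∧ q ≤ ((gperm σ) a).val)) := by
    apply Finset.filter_congr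
    intro a _
    simp
  have hfree : ((FP σ).filter (fun a => a.val < p ∧ q ≤ (gfun σ a).val)).card
      = min (c1 σ p) (c2 σ q) := by
    have he : ((FP σ).filter (fun a => a.val < p ∧ q ≤ (gfun σ a).val))
        = (FP σ).filter (fun a => idx (FP σ) a < min (c1 σ p) (c2 σ q)) := by
      apply Finset.filter_congr
      intro a ha
      rw [lt_min_iff, idx_lt_iff ha p, gfun_free_ge_iff ha q]
      rfl
    rw [he, idx_count]
    have : c1 σ p ≤ (FP σ).card := Finset.card_le_card (Finset.filter_subset _ _)
    omega
  have hforced : (((Finset.univ : Finset (Fin (2*m+1))) \ FP σ).filter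
      (fun a => a.val < p ∧ q ≤ (gfun σ a).val)).card = bigc σ p q := by
    symm
    apply Finset.card_bij (fun j _ => (⟨m+1+j.val, by omega⟩ : Fin (2*m+1)))
    · intro j hj
      simp only [bigc, Finset.mem_filter] at hj
      obtain ⟨hj0, hj1, hj2⟩ := hj
      simp only [dset, Finset.mem_filter] at hj0
      rw [Finset.mem_filter, Finset.mem_sdiff]
      refine ⟨⟨Finset.mem_univ _, not_mem_FP_iff.mpr ⟨j, hj0.2, rfl⟩⟩, hj1, ?_⟩
      rw [gfun_forced_val σ j hj0.2 rfl]
      exact hj2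
    · intro j _ j' _ h
      rw [Fin.mk.injEq] at h
      exact Fin.ext (by omega)
    · intro i hi
      rw [Finset.mem_filter, Finset.mem_sdiff] at hi
      obtain ⟨⟨-, hi0⟩, hi1, hi2⟩ := hi
      obtain ⟨j, hj1, hj2⟩ := not_mem_FP_iff.mp hi0
      refine ⟨j, ?_, Fin.ext (by show m+1+j.val = i.val; omega)⟩
      simp only [bigc, dset, Finset.mem_filter]
      rw [gfun_forced_val σ j hj1 hj2] at hi2
      refine ⟨⟨Finset.mem_univ _, hj1⟩, by omega, hi2⟩
  rw [this, hsplit, Finset.card_union_of_disjoint hdisj, hfree, hforced]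
  omega
end BCR

namespace BCR
variable {m : ℕ}

lemma dcRel_refl (x : Equiv.Perm (Fin (2 * m + 1))) : dcRel m x x :=
  ⟨1, (WI m).one_mem, 1, (WI m).one_mem, by group⟩

lemma dcRel_symm {x y : Equiv.Perm (Fin (2 * m + 1))} (h : dcRel m x y) : dcRel m y x := by
  obtain ⟨u, hu, v, hv, rfl⟩ := h
  exact ⟨u⁻¹, (WI m).inv_mem hu, v⁻¹, (WI m).inv_mem hv, by group⟩

lemma dcRel_trans {x y z : Equiv.Perm (Fin (2 * m + 1))} (h1 : dcRel m x y)
    (h2 : dcRel m y z) : dcRel m x z := by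
  obtain ⟨u, hu, v, hv, rfl⟩ := h1
  obtain ⟨u', hu', v', hv', rfl⟩ := h2
  exact ⟨u' * u, (WI m).mul_mem hu' hu, v * v', (WI m).mul_mem hv hv', by group⟩

/-- the double coset invariant -/
def stat (σ : Rook m) (z : Equiv.Perm (Fin (2 * m + 1))) : Prop :=
  ∀ (i : Fin (2*m+1)) (j : Fin m), i.val = m+1+j.val →
    (σ.1 j ≠ 0 → (z i).val = m + σ.1 j) ∧ (σ.1 j = 0 → (z i).val ≤ m)

lemma idx_big_ge {s : Finset (Fin (2*m+1))} (hsmall : ∀ b : Fin (2*m+1), b.val ≤ m → b ∈ s)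
    {x : Fin (2*m+1)} (hx : m < x.val) : m + 1 ≤ idx s x := by
  have h1 : (Finset.univ : Finset (Fin (m+1))).card = m + 1 := by
    rw [Finset.card_univ, Fintype.card_fin]
  have h2 : (Finset.univ : Finset (Fin (m+1))).card ≤ (s.filter (fun b => b < x)).card := by
    apply Finset.card_le_card_of_injOn (fun t => (⟨t.val, by omega⟩ : Fin (2*m+1)))
    · intro t _
      rw [Finset.mem_coe, Finset.mem_filter]
      refine ⟨hsmall _ (by simp; omega), ?_⟩
      rw [Fin.lt_def]
      simp
      omega
    · intro t _ t' _ h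
      rw [Fin.mk.injEq] at h
      exact Fin.ext h
  rw [idx]
  omega

lemma stat_gperm (σ : Rook m) : stat σ (gperm σ) := by
  intro i j hij
  constructor
  · intro hj
    exact gfun_forced_val σ j hj hij
  · intro hj
    have hiFP : i ∈ FP σ := by
      rw [FP, Finset.mem_filter]
      refine ⟨Finset.mem_univ _, Or.inr ?_⟩
      intro j' hj' hval
      have : j = j' := Fin.ext (by omega)
      rw [this] at hj
      exact hj' hj
    obtain ⟨hmem, hidx⟩ := gfun_free hiFP
    by_contra hcon
    push_neg at hcon
    have h1 : m + 1 ≤ idx (FP σ) i :=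
      idx_big_ge (fun b hb => mem_FP_small hb) (by omega)
    have h2 : m + 1 ≤ idx (FV σ) (gfun σ i) :=
      idx_big_ge (fun b hb => mem_FV_small hb) hcon
    have h3 := FV_card σ
    omega

lemma stat_invariant {σ : Rook m} {z : Equiv.Perm (Fin (2 * m + 1))}
    {u v : Equiv.Perm (Fin (2 * m + 1))} (hu : u ∈ WI m) (hv : v ∈ WI m)
    (hz : stat σ z) : stat σ (u * z * v) := by
  intro i j hij
  have hvi : v i = i := WI_fixes hv i (by omega)
  have he : (u * z * v) i = u (z i) := by
    rw [Equiv.Perm.mul_apply, Equiv.Perm.mul_apply, hvi]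
  constructor
  · intro hj
    have h1 : (z i).val = m + σ.1 j := ((hz i j hij).1) hj
    have h2 : u (z i) = z i := WI_fixes hu (z i) (by omega)
    rw [he, h2]
    exact h1
  · intro hj
    have h1 : (z i).val ≤ m := ((hz i j hij).2) hj
    rw [he]
    exact small_apply_small (WI_fixes hu) h1

lemma stat_unique {σ σ' : Rook m} {z : Equiv.Perm (Fin (2 * m + 1))}
    (h : stat σ z) (h' : stat σ' z) : σ = σ' := by
  apply Subtype.ext
  funext j
  have hj := h ⟨m+1+j.val, by omega⟩ j rfl
  have hj' := h' ⟨m+1+j.val, by omega⟩ j rfl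
  rcases Nat.eq_zero_or_pos (σ.1 j) with h0 | h0 <;>
    rcases Nat.eq_zero_or_pos (σ'.1 j) with h0' | h0'
  · rw [h0, h0']
  · have := hj.2 h0
    have := hj'.1 (by omega)
    omega
  · have := hj.1 (by omega)
    have := hj'.2 h0'
    omega
  · have := hj.1 (by omega)
    have := hj'.1 (by omega)
    omega

/-- extension of a partial injection to a permutation supported in `S` -/
lemma exists_perm_extend {n : ℕ} [NeZero n] (S A B : Finset (Fin n)) (hA : A ⊆ S)
    (hB : B ⊆ S) (f : Fin n → Fin n) (hf : Set.InjOn f A) (hfAB : ∀ x ∈ A, f x ∈ B)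
    (hcard : A.card = B.card) :
    ∃ u : Equiv.Perm (Fin n), (∀ x ∈ A, u x = f x) ∧ (∀ x, x ∉ S → u x = x) := by
  have hSA : (S \ A).card = (S \ B).card := by
    rw [Finset.card_sdiff_of_subset hA, Finset.card_sdiff_of_subset hB, hcard]
  set ufun : Fin n → Fin n := fun x =>
    if x ∈ A then f x else if x ∈ S then nth (S \ B) (idx (S \ A) x) else x with hufun
  have hAp : ∀ x, x ∈ A → ufun x = f x := by
    intro x hx
    show (if x ∈ A then f x else if x ∈ S then nth (S \ B) (idx (S \ A) x) else x) = f x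
    rw [if_pos hx]
  have hMp : ∀ x, x ∉ A → x ∈ S → ufun x = nth (S \ B) (idx (S \ A) x) := by
    intro x hx1 hx2
    show (if x ∈ A then f x else if x ∈ S then nth (S \ B) (idx (S \ A) x) else x) = _
    rw [if_neg hx1, if_pos hx2]
  have hOp : ∀ x, x ∉ A → x ∉ S → ufun x = x := by
    intro x hx1 hx2
    show (if x ∈ A then f x else if x ∈ S then nth (S \ B) (idx (S \ A) x) else x) = x
    rw [if_neg hx1, if_neg hx2]
  have hmid : ∀ x, x ∈ S → x ∉ A →
      ufun x ∈ S \ B ∧ idx (S \ B) (ufun x) = idx (S \ A) x := by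
    intro x hxS hxA
    have hx : x ∈ S \ A := Finset.mem_sdiff.mpr ⟨hxS, hxA⟩
    have hlt : idx (S \ A) x < (S \ B).card := hSA ▸ idx_lt_card hx
    rw [hMp x hxA hxS]
    exact nth_spec hlt
  have hinj : Function.Injective ufun := by
    intro x y hxy
    by_cases hxA : x ∈ A
    · by_cases hyA : y ∈ A
      · exact hf hxA hyA (by rw [← hAp x hxA, ← hAp y hyA, hxy])
      · by_cases hyS : y ∈ S
        · exfalso
          have h2 := hmid y hyS hyA
          rw [← hxy, hAp x hxA] at h2
          have := hfAB x hxA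
          have := Finset.mem_sdiff.mp h2.1
          tauto
        · exfalso
          have h2 := hOp y hyA hyS
          rw [hAp x hxA, h2] at hxy
          exact hyS (hB (hxy ▸ hfAB x hxA))
    · by_cases hxS : x ∈ S
      · by_cases hyA : y ∈ A
        · exfalso
          have h2 := hmid x hxS hxA
          rw [hxy, hAp y hyA] at h2
          have := hfAB y hyA
          have := Finset.mem_sdiff.mp h2.1
          tauto
        · by_cases hyS : y ∈ S
          · have h1 := hmid x hxS hxA
            have h2 := hmid y hyS hyA
            rw [hxy] at h1
            exact idx_inj (Finset.mem_sdiff.mpr ⟨hxS, hxA⟩) (Finset.mem_sdiff.mpr ⟨hyS, hyA⟩)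
              (by rw [← h1.2, h2.2])
          · exfalso
            have h1 := hmid x hxS hxA
            have h2 := hOp y hyA hyS
            rw [hxy, h2] at h1
            exact hyS (Finset.mem_sdiff.mp h1.1).1
      · by_cases hyA : y ∈ A
        · exfalso
          have h2 := hOp x hxA hxS
          rw [h2, hAp y hyA] at hxy
          exact hxS (hB (hxy.symm ▸ hfAB y hyA))
        · by_cases hyS : y ∈ S
          · exfalso
            have h1 := hmid y hyS hyA
            have h2 := hOp x hxA hxS
            rw [← hxy, h2] at h1
            exact hxS (Finset.mem_sdiff.mp h1.1).1
          · rw [← hOp x hxA hxS, ← hOp y hyA hyS, hxy]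
  refine ⟨Equiv.ofBijective ufun (Finite.injective_iff_bijective.mp hinj), ?_, ?_⟩
  · intro x hx
    exact hAp x hx
  · intro x hx
    exact hOp x (fun h => hx (hA h)) hx

lemma dcRel_stat {σ : Rook m} {z z' : Equiv.Perm (Fin (2 * m + 1))}
    (h : dcRel m z z') (hz : stat σ z) : stat σ z' := by
  obtain ⟨u, hu, v, hv, rfl⟩ := h
  exact stat_invariant hu hv hz

lemma stat_free_small {σ : Rook m} {z : Equiv.Perm (Fin (2 * m + 1))} (hz : stat σ z)
    {i : Fin (2*m+1)} (hiFP : i ∈ FP σ) (hi : m < i.val) : (z i).val ≤ m := by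
  set j : Fin m := ⟨i.val - (m+1), by have := i.isLt; omega⟩ with hjdef
  have hij : i.val = m+1+j.val := by rw [hjdef]; simp; omega
  have hj0 : σ.1 j = 0 := by
    by_contra hc
    exact absurd hiFP (not_mem_FP_iff.mpr ⟨j, hc, hij⟩)
  exact (hz i j hij).2 hj0

lemma stat_forced_eq {σ : Rook m} {z z' : Equiv.Perm (Fin (2 * m + 1))} (hz : stat σ z)
    (hz' : stat σ z') {i : Fin (2*m+1)} (hiFP : i ∉ FP σ) : z i = z' i := by
  obtain ⟨j, hj1, hj2⟩ := not_mem_FP_iff.mp hiFP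
  apply Fin.ext
  rw [(hz i j hj2).1 hj1, (hz' i j hj2).1 hj1]

/-- any permutation with the right invariant is in the double coset of `gperm σ` -/
lemma stat_dcRel {σ : Rook m} {z : Equiv.Perm (Fin (2 * m + 1))} (hz : stat σ z) :
    dcRel m (gperm σ) z := by
  classical
  set w := gperm σ with hwdef
  have hw : stat σ w := stat_gperm σ
  set BPf : Finset (Fin (2*m+1)) := (FP σ).filter (fun i => m < i.val) with hBPf
  set S : Finset (Fin (2*m+1)) := Finset.univ.filter (fun b => b.val ≤ m) with hS
  set A : Finset (Fin (2*m+1)) := BPf.image ⇑w with hAdef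
  set B : Finset (Fin (2*m+1)) := BPf.image ⇑z with hBdef
  have hmemS : ∀ b : Fin (2*m+1), b ∈ S ↔ b.val ≤ m := by
    intro b
    rw [hS, Finset.mem_filter]
    simp
  have hA : A ⊆ S := by
    intro x hx
    rw [hAdef, Finset.mem_image] at hx
    obtain ⟨i, hi, rfl⟩ := hx
    rw [hBPf, Finset.mem_filter] at hi
    rw [hmemS]
    exact stat_free_small hw hi.1 hi.2
  have hB : B ⊆ S := by
    intro x hx
    rw [hBdef, Finset.mem_image] at hx
    obtain ⟨i, hi, rfl⟩ := hx
    rw [hBPf, Finset.mem_filter] at hi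
    rw [hmemS]
    exact stat_free_small hz hi.1 hi.2
  have hcard : A.card = B.card := by
    rw [hAdef, hBdef, Finset.card_image_of_injective _ w.injective,
      Finset.card_image_of_injective _ z.injective]
  set f : Fin (2*m+1) → Fin (2*m+1) := fun x => z (w⁻¹ x) with hfdef
  have hf : Set.InjOn f A := fun x _ y _ hxy =>
    w⁻¹.injective (z.injective hxy)
  have hfAB : ∀ x ∈ A, f x ∈ B := by
    intro x hx
    rw [hAdef, Finset.mem_image] at hx
    obtain ⟨i, hi, rfl⟩ := hx
    rw [hBdef, Finset.mem_image]
    refine ⟨i, hi, ?_⟩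
    rw [hfdef]
    simp only [Equiv.Perm.inv_def, Equiv.symm_apply_apply]
  obtain ⟨u, hu1, hu2⟩ := exists_perm_extend S A B hA hB f hf hfAB hcard
  have huWI : u ∈ WI m := by
    rw [mem_WI_iff]
    intro i hi
    apply hu2
    rw [hmemS]
    omega
  have hkey : ∀ i : Fin (2*m+1), m < i.val → u⁻¹ (z i) = w i := by
    intro i hi
    by_cases hiFP : i ∈ FP σ
    · have hiBPf : i ∈ BPf := by rw [hBPf, Finset.mem_filter]; exact ⟨hiFP, hi⟩
      have hwA : w i ∈ A := by rw [hAdef, Finset.mem_image]; exact ⟨i, hiBPf, rfl⟩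
      have h1 : u (w i) = z i := by
        rw [hu1 (w i) hwA, hfdef]
        simp only [Equiv.Perm.inv_def, Equiv.symm_apply_apply]
      rw [← h1, Equiv.Perm.inv_def, Equiv.symm_apply_apply]
    · have hzw : z i = w i := stat_forced_eq hz hw hiFP
      obtain ⟨j, hj1, hj2⟩ := not_mem_FP_iff.mp hiFP
      have hbig : m < (z i).val := by
        have := (hz i j hj2).1 hj1
        omega
      have h1 : u (z i) = z i := by
        apply hu2
        rw [hmemS]
        omega
      have h2 : u⁻¹ (z i) = z i := by
        conv_lhs => rw [← h1]
        rw [Equiv.Perm.inv_def, Equiv.symm_apply_apply]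
      rw [h2, hzw]
  set v : Equiv.Perm (Fin (2*m+1)) := w⁻¹ * u⁻¹ * z with hvdef
  have hvWI : v ∈ WI m := by
    rw [mem_WI_iff]
    intro i hi
    have : v i = w⁻¹ (u⁻¹ (z i)) := by
      rw [hvdef, Equiv.Perm.mul_apply, Equiv.Perm.mul_apply]
    rw [this, hkey i hi, Equiv.Perm.inv_def, Equiv.symm_apply_apply]
  refine ⟨u, huWI, v, hvWI, ?_⟩
  rw [hvdef]
  group

def sfun (w : Equiv.Perm (Fin (2*m+1))) (j : Fin m) : ℕ :=
  if m < (w ⟨m+1+j.val, by omega⟩).val then (w ⟨m+1+j.val, by omega⟩).val - m else 0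

lemma sfun_le (w : Equiv.Perm (Fin (2*m+1))) (j : Fin m) : sfun w j ≤ m := by
  rw [sfun]
  split_ifs with h
  · have := (w ⟨m+1+j.val, by omega⟩).isLt
    omega
  · omega

lemma sfun_inj (w : Equiv.Perm (Fin (2*m+1))) :
    ∀ i j, sfun w i ≠ 0 → sfun w i = sfun w j → i = j := by
  intro i j hi heq
  simp only [sfun] at hi heq
  split_ifs at hi heq with h1 h2
  · have hvv : (w ⟨m+1+i.val, by omega⟩).val = (w ⟨m+1+j.val, by omega⟩).val := by omega
    have := w.injective (Fin.ext hvv)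
    rw [Fin.mk.injEq] at this
    exact Fin.ext (by omega)
  · omega
  · omega
  · omega

/-- the rook element read off from a permutation -/
def sigmaOf (w : Equiv.Perm (Fin (2 * m + 1))) : Rook m :=
  ⟨sfun w, fun j => sfun_le w j, sfun_inj w⟩

lemma stat_sigmaOf (w : Equiv.Perm (Fin (2 * m + 1))) : stat (sigmaOf w) w := by
  intro i j hij
  have hw : w ⟨m+1+j.val, by omega⟩ = w i :=
    congrArg w (Fin.ext (by show m+1+j.val = i.val; omega))
  have hval : (sigmaOf w).1 j
      = if m < (w i).val then (w i).val - m else 0 := by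
    show sfun w j = _
    rw [sfun, hw]
  rw [hval]
  constructor
  · intro hj
    split_ifs at hj ⊢ with h
    · omega
    · omega
  · intro hj
    split_ifs at hj with h
    · omega
    · omega

theorem coset_exists_unique (w : Equiv.Perm (Fin (2 * m + 1))) :
    ∃! σ : Rook m, dcRel m w (gperm σ) := by
  refine ⟨sigmaOf w, dcRel_symm (stat_dcRel (stat_sigmaOf w)), ?_⟩
  intro σ' h'
  have h2 : stat σ' w := dcRel_stat (dcRel_symm h') (stat_gperm σ')
  exact stat_unique h2 (stat_sigmaOf w)

end BCR

namespace BCR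
variable {m : ℕ}

lemma stat_maps_FP_to_FV {σ : Rook m} {z : Equiv.Perm (Fin (2 * m + 1))}
    (hz : stat σ z) {a : Fin (2*m+1)} (ha : a ∈ FP σ) : z a ∈ FV σ := by
  by_contra hc
  obtain ⟨j, hj1, hj2⟩ := not_mem_FV_iff.mp hc
  have h2 : (z ⟨m+1+j.val, by omega⟩).val = m + σ.1 j := (hz _ j rfl).1 hj1
  have : z a = z ⟨m+1+j.val, by omega⟩ := Fin.ext (by omega)
  have := z.injective this
  rw [this] at ha
  exact absurd ha (not_mem_FP_iff.mpr ⟨j, hj1, rfl⟩)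

lemma rnk_le_gperm {σ : Rook m} {z : Equiv.Perm (Fin (2 * m + 1))} (hz : stat σ z)
    (p q : ℕ) : rnk z p q ≤ rnk (gperm σ) p q := by
  have hsplit : (Finset.univ.filter
      (fun a : Fin (2*m+1) => a.val < p ∧ q ≤ (z a).val))
      = ((FP σ).filter (fun a => a.val < p ∧ q ≤ (z a).val))
        ∪ (((Finset.univ : Finset (Fin (2*m+1))) \ FP σ).filter
            (fun a => a.val < p ∧ q ≤ (z a).val)) := by
    rw [← Finset.filter_union, Finset.union_sdiff_of_subset (Finset.subset_univ _)]
  have hdisj : Disjoint ((FP σ).filter (fun a => a.val < p ∧ q ≤ (z a).val))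
      (((Finset.univ : Finset (Fin (2*m+1))) \ FP σ).filter
        (fun a => a.val < p ∧ q ≤ (z a).val)) := by
    apply Finset.disjoint_filter_filter
    exact Finset.disjoint_sdiff
  have h0 : (Finset.univ.filter
      (fun a : Fin (2*m+1) => 0 ≤ a.val ∧ a.val < p ∧ q ≤ (z a).val))
      = (Finset.univ.filter (fun a : Fin (2*m+1) => a.val < p ∧ q ≤ (z a).val)) := by
    apply Finset.filter_congr
    intro a _
    simp
  have hforced : (((Finset.univ : Finset (Fin (2*m+1))) \ FP σ).filter
      (fun a => a.val < p ∧ q ≤ (z a).val)).card = bigc σ p q := by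
    symm
    apply Finset.card_bij (fun j _ => (⟨m+1+j.val, by omega⟩ : Fin (2*m+1)))
    · intro j hj
      simp only [bigc, dset, Finset.mem_filter] at hj
      obtain ⟨⟨-, hj0⟩, hj1, hj2⟩ := hj
      rw [Finset.mem_filter, Finset.mem_sdiff]
      refine ⟨⟨Finset.mem_univ _, not_mem_FP_iff.mpr ⟨j, hj0, rfl⟩⟩, hj1, ?_⟩
      rw [(hz _ j rfl).1 hj0]
      exact hj2
    · intro j _ j' _ h
      rw [Fin.mk.injEq] at h
      exact Fin.ext (by omega)
    · intro i hi
      rw [Finset.mem_filter, Finset.mem_sdiff] at hi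
      obtain ⟨⟨-, hi0⟩, hi1, hi2⟩ := hi
      obtain ⟨j, hj1, hj2⟩ := not_mem_FP_iff.mp hi0
      refine ⟨j, ?_, Fin.ext (by show m+1+j.val = i.val; omega)⟩
      simp only [bigc, dset, Finset.mem_filter]
      rw [(hz i j hj2).1 hj1] at hi2
      refine ⟨⟨Finset.mem_univ _, hj1⟩, by omega, hi2⟩
  have hfree : ((FP σ).filter (fun a => a.val < p ∧ q ≤ (z a).val)).card
      ≤ min (c1 σ p) (c2 σ q) := by
    rw [le_min_iff]
    constructor
    · apply Finset.card_le_card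
      intro a ha
      rw [Finset.mem_filter] at ha ⊢
      exact ⟨ha.1, ha.2.1⟩
    · rw [c2]
      apply Finset.card_le_card_of_injOn (fun a => z a)
      · intro a ha
        rw [Finset.mem_coe, Finset.mem_filter] at ha ⊢
        exact ⟨stat_maps_FP_to_FV hz ha.1, ha.2.2⟩
      · intro a _ b _ h
        exact z.injective h
  rw [rnk, cnt, rnk_gperm, h0, hsplit, Finset.card_union_of_disjoint hdisj, hforced]
  omega

lemma gperm_maxRep (σ : Rook m) : maxRep m (gperm σ) (gperm σ) := by
  refine ⟨dcRel_refl _, fun z hz => ?_⟩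
  have h1 : stat σ z := dcRel_stat (dcRel_symm hz) (stat_gperm σ)
  exact ehresmann_hard (fun p q => rnk_le_gperm h1 p q)

lemma maxRep_unique {x a b : Equiv.Perm (Fin (2 * m + 1))} (ha : maxRep m a x)
    (hb : maxRep m b x) : a = b :=
  bruhatLE_antisymm (hb.2 a ha.1) (ha.2 b hb.1)

lemma dcLE_gperm_iff (σ τ : Rook m) :
    dcLE m (gperm τ) (gperm σ) ↔ bruhatLE (gperm τ) (gperm σ) := by
  constructor
  · rintro ⟨x₁, y₁, hx, hy, hb⟩
    rw [maxRep_unique hx (gperm_maxRep τ), maxRep_unique hy (gperm_maxRep σ)] at hb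
    exact hb
  · intro h
    exact ⟨gperm τ, gperm σ, gperm_maxRep τ, gperm_maxRep σ, h⟩

end BCR

-- Part 9: explicit formulas and the suffix-count criterion
namespace BCR
variable {m : ℕ}

lemma card_val_lt {n : ℕ} (p : ℕ) :
    ((Finset.univ : Finset (Fin n)).filter (fun v => v.val < p)).card = min p n := by
  rw [← Finset.card_range (min p n)]
  apply Finset.card_bij (fun v _ => v.val)
  · intro v hv
    rw [Finset.mem_filter] at hv
    rw [Finset.mem_range]
    have := v.isLt
    omega
  · intro v _ v' _ h
    exact Fin.ext h
  · intro r hr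
    rw [Finset.mem_range] at hr
    exact ⟨⟨r, by omega⟩, Finset.mem_filter.mpr ⟨Finset.mem_univ _, by simp; omega⟩, rfl⟩

lemma card_val_ge {n : ℕ} (a : ℕ) :
    ((Finset.univ : Finset (Fin n)).filter (fun v => a ≤ v.val)).card = n - a := by
  have h := Finset.card_filter_add_card_filter_not
    (s := (Finset.univ : Finset (Fin n))) (p := fun v => a ≤ v.val)
  have h2 : (Finset.univ.filter (fun v : Fin n => ¬ a ≤ v.val)).card = min a n := by
    rw [← card_val_lt a]
    congr 1
    apply Finset.filter_congr
    intro v _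
    simp only [not_le]
  have h3 : (Finset.univ : Finset (Fin n)).card = n := by
    rw [Finset.card_univ, Fintype.card_fin]
  omega

def pre (σ : Rook m) (k t : ℕ) : ℕ :=
  (Finset.univ.filter (fun j : Fin m => j.val < k ∧ t ≤ σ.1 j)).card
def tot (σ : Rook m) (t : ℕ) : ℕ :=
  (Finset.univ.filter (fun j : Fin m => t ≤ σ.1 j)).card
def suf (σ : Rook m) (k t : ℕ) : ℕ :=
  (Finset.univ.filter (fun j : Fin m => k ≤ j.val ∧ t ≤ σ.1 j)).card

lemma pre_add_suf (σ : Rook m) (k t : ℕ) : pre σ k t + suf σ k t = tot σ t := by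
  rw [pre, suf, tot, ← Finset.card_union_of_disjoint]
  · congr 1
    ext j
    simp only [Finset.mem_union, Finset.mem_filter, Finset.mem_univ, true_and]
    omega
  · rw [Finset.disjoint_left]
    intro j hj hj'
    simp only [Finset.mem_filter, Finset.mem_univ, true_and] at hj hj'
    omega

lemma suf_zerok (σ : Rook m) (t : ℕ) : suf σ 0 t = tot σ t := by
  rw [suf, tot]
  congr 1
  apply Finset.filter_congr
  intro j _
  simp

lemma pre_le_k (σ : Rook m) (k t : ℕ) : pre σ k t ≤ k := by
  calc pre σ k t ≤ (Finset.range k).card := by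
        apply Finset.card_le_card_of_injOn (fun j => j.val)
        · intro j hj
          rw [Finset.mem_coe, Finset.mem_filter] at hj
          rw [Finset.mem_coe, Finset.mem_range]
          exact hj.2.1
        · intro j _ j' _ h
          exact Fin.ext h
    _ = k := Finset.card_range k

lemma pre_anti (σ : Rook m) (k : ℕ) {t t' : ℕ} (h : t ≤ t') : pre σ k t' ≤ pre σ k t := by
  apply Finset.card_le_card
  intro j hj
  rw [Finset.mem_filter] at hj ⊢
  exact ⟨hj.1, hj.2.1, le_trans h hj.2.2⟩

lemma pre_le_tot (σ : Rook m) (k t : ℕ) : pre σ k t ≤ tot σ t := by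
  apply Finset.card_le_card
  intro j hj
  rw [Finset.mem_filter] at hj ⊢
  exact ⟨hj.1, hj.2.2⟩

lemma suf_le_tot (σ : Rook m) (k t : ℕ) : suf σ k t ≤ tot σ t := by
  apply Finset.card_le_card
  intro j hj
  rw [Finset.mem_filter] at hj ⊢
  exact ⟨hj.1, hj.2.2⟩

lemma tot_le (σ : Rook m) {t : ℕ} (h1 : 1 ≤ t) (h2 : t ≤ m) : tot σ t ≤ m + 1 - t := by
  rw [tot]
  have hc : (Finset.Icc t m).card = m + 1 - t := by
    rw [Nat.card_Icc]
  rw [← hc]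
  apply Finset.card_le_card_of_injOn (fun j => σ.1 j)
  · intro j hj
    rw [Finset.mem_coe, Finset.mem_filter] at hj
    rw [Finset.mem_coe, Finset.mem_Icc]
    exact ⟨hj.2, σ.2.1 j⟩
  · intro j hj j' hj' h
    rw [Finset.mem_coe, Finset.mem_filter] at hj hj'
    exact σ.2.2 j j' (by omega) h

lemma tot_zero (σ : Rook m) {t : ℕ} (h : m < t) : tot σ t = 0 := by
  rw [tot, Finset.card_eq_zero, Finset.filter_eq_empty_iff]
  intro j _
  have := σ.2.1 j
  omega

lemma tot_le_m (σ : Rook m) (t : ℕ) : tot σ t ≤ m := by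
  calc tot σ t ≤ (Finset.univ : Finset (Fin m)).card := Finset.card_le_card
        (Finset.filter_subset _ _)
    _ = m := by rw [Finset.card_univ, Fintype.card_fin]

lemma bigc_eq (σ : Rook m) (p q : ℕ) :
    bigc σ p q = pre σ (min (p - (m+1)) m) (max (q - m) 1) := by
  rw [bigc, pre, dset, Finset.filter_filter]
  congr 1
  apply Finset.filter_congr
  intro j _
  have := j.isLt
  constructor
  · rintro ⟨h1, h2, h3⟩
    omega
  · rintro ⟨h1, h2⟩
    omega

lemma c1_eq (σ : Rook m) (p : ℕ) :
    c1 σ p = min p (2*m+1) - pre σ (min (p - (m+1)) m) 1 := by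
  have h1 : ((Finset.univ : Finset (Fin (2*m+1))).filter (fun v => v.val < p)).card
      = min p (2*m+1) := card_val_lt p
  have h2 : (((Finset.univ : Finset (Fin (2*m+1))) \ FP σ).filter
      (fun v => v.val < p)).card = pre σ (min (p - (m+1)) m) 1 := by
    rw [pre]
    symm
    apply Finset.card_bij (fun j _ => (⟨m+1+j.val, by omega⟩ : Fin (2*m+1)))
    · intro j hj
      rw [Finset.mem_filter] at hj
      obtain ⟨-, hj1, hj2⟩ := hj
      rw [Finset.mem_filter, Finset.mem_sdiff]
      refine ⟨⟨Finset.mem_univ _, not_mem_FP_iff.mpr ⟨j, by omega, rfl⟩⟩, ?_⟩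
      show m+1+j.val < p
      omega
    · intro j _ j' _ h
      rw [Fin.mk.injEq] at h
      exact Fin.ext (by omega)
    · intro i hi
      rw [Finset.mem_filter, Finset.mem_sdiff] at hi
      obtain ⟨⟨-, hi0⟩, hi1⟩ := hi
      obtain ⟨j, hj1, hj2⟩ := not_mem_FP_iff.mp hi0
      refine ⟨j, ?_, Fin.ext (by show m+1+j.val = i.val; omega)⟩
      rw [Finset.mem_filter]
      have := j.isLt
      exact ⟨Finset.mem_univ _, by omega, by omega⟩
  have hsplit : ((Finset.univ : Finset (Fin (2*m+1))).filter (fun v => v.val < p))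
      = ((FP σ).filter (fun v => v.val < p))
        ∪ (((Finset.univ : Finset (Fin (2*m+1))) \ FP σ).filter (fun v => v.val < p)) := by
    rw [← Finset.filter_union, Finset.union_sdiff_of_subset (Finset.subset_univ _)]
  have hdisj : Disjoint ((FP σ).filter (fun v : Fin (2*m+1) => v.val < p))
      (((Finset.univ : Finset (Fin (2*m+1))) \ FP σ).filter (fun v => v.val < p)) := by
    apply Finset.disjoint_filter_filter
    exact Finset.disjoint_sdiff
  have := Finset.card_union_of_disjoint hdisj
  rw [← hsplit] at this
  rw [c1]
  omega

lemma c2_eq (σ : Rook m) (q : ℕ) :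
    c2 σ q = (2*m+1 - q) - tot σ (max (q - m) 1) := by
  have h1 : ((Finset.univ : Finset (Fin (2*m+1))).filter (fun v => q ≤ v.val)).card
      = 2*m+1 - q := card_val_ge q
  have h2 : (((Finset.univ : Finset (Fin (2*m+1))) \ FV σ).filter
      (fun v => q ≤ v.val)).card = tot σ (max (q - m) 1) := by
    rw [tot]
    symm
    apply Finset.card_bij (fun j _ =>
      (⟨m + σ.1 j, by have := σ.2.1 j; omega⟩ : Fin (2*m+1)))
    · intro j hj
      rw [Finset.mem_filter] at hj
      obtain ⟨-, hj1⟩ := hj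
      rw [Finset.mem_filter, Finset.mem_sdiff]
      refine ⟨⟨Finset.mem_univ _, not_mem_FV_iff.mpr ⟨j, by omega, rfl⟩⟩, ?_⟩
      show q ≤ m + σ.1 j
      omega
    · intro j hj j' hj' h
      rw [Finset.mem_filter] at hj hj'
      rw [Fin.mk.injEq] at h
      exact σ.2.2 j j' (by omega) (by omega)
    · intro i hi
      rw [Finset.mem_filter, Finset.mem_sdiff] at hi
      obtain ⟨⟨-, hi0⟩, hi1⟩ := hi
      obtain ⟨j, hj1, hj2⟩ := not_mem_FV_iff.mp hi0
      refine ⟨j, ?_, Fin.ext (by show m + σ.1 j = i.val; omega)⟩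
      rw [Finset.mem_filter]
      exact ⟨Finset.mem_univ _, by omega⟩
  have hsplit : ((Finset.univ : Finset (Fin (2*m+1))).filter (fun v => q ≤ v.val))
      = ((FV σ).filter (fun v => q ≤ v.val))
        ∪ (((Finset.univ : Finset (Fin (2*m+1))) \ FV σ).filter (fun v => q ≤ v.val)) := by
    rw [← Finset.filter_union, Finset.union_sdiff_of_subset (Finset.subset_univ _)]
  have hdisj : Disjoint ((FV σ).filter (fun v : Fin (2*m+1) => q ≤ v.val))
      (((Finset.univ : Finset (Fin (2*m+1))) \ FV σ).filter (fun v => q ≤ v.val)) := by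
    apply Finset.disjoint_filter_filter
    exact Finset.disjoint_sdiff
  have := Finset.card_union_of_disjoint hdisj
  rw [← hsplit] at this
  rw [c2]
  omega

/-- Claim A : rank domination is equivalent to suffix-count domination. -/
lemma rnk_suf_iff (ρ₁ ρ₂ : Rook m) :
    (∀ p q, rnk (gperm ρ₁) p q ≤ rnk (gperm ρ₂) p q)
      ↔ (∀ k t, k ≤ m → 1 ≤ t → suf ρ₂ k t ≤ suf ρ₁ k t) := by
  constructor
  · intro h k t hk ht
    rcases le_or_gt t m with htm | htm
    · have hh := h (m+1+k) (m+t)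
      rw [rnk_gperm, rnk_gperm, bigc_eq, bigc_eq, c1_eq, c1_eq, c2_eq, c2_eq] at hh
      have e1 : min (m+1+k - (m+1)) m = k := by omega
      have e2 : max (m+t - m) 1 = t := by omega
      rw [e1, e2] at hh
      have f1 := pre_add_suf ρ₁ k t
      have f2 := pre_add_suf ρ₂ k t
      have f3 := tot_le ρ₁ ht htm
      have f4 := tot_le ρ₂ ht htm
      have f5 := pre_le_k ρ₁ k 1
      have f6 := pre_le_k ρ₂ k 1
      have f7 := pre_anti ρ₁ k ht
      have f8 := pre_anti ρ₂ k ht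
      have f9 := pre_le_tot ρ₁ k t
      have f10 := pre_le_tot ρ₂ k t
      omega
    · have : suf ρ₂ k t ≤ tot ρ₂ t := suf_le_tot ρ₂ k t
      rw [tot_zero ρ₂ htm] at this
      omega
  · intro h p q
    rw [rnk_gperm, rnk_gperm, bigc_eq, bigc_eq, c1_eq, c1_eq, c2_eq, c2_eq]
    set k := min (p - (m+1)) m with hkdef
    have hk : k ≤ m := min_le_right _ _
    rcases le_or_gt q (m+1) with hq | hq
    · have et : max (q - m) 1 = 1 := by omega
      rw [et]
      have S2 := h k 1 hk (le_refl 1)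
      have e3 := pre_add_suf ρ₁ k 1
      have e4 := pre_add_suf ρ₂ k 1
      have f1 := pre_le_k ρ₁ k 1
      have f2 := pre_le_k ρ₂ k 1
      have g1 := tot_le_m ρ₁ 1
      have g2 := tot_le_m ρ₂ 1
      omega
    · have et : max (q - m) 1 = q - m := by omega
      rw [et]
      have S1 := h k (q-m) hk (by omega)
      have S3 := h 0 (q-m) (Nat.zero_le m) (by omega)
      have e1 := pre_add_suf ρ₁ k (q-m)
      have e2 := pre_add_suf ρ₂ k (q-m)
      have e5 := suf_zerok ρ₁ (q-m)
      have e6 := suf_zerok ρ₂ (q-m)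
      have f1 := pre_le_k ρ₁ k 1
      have f2 := pre_le_k ρ₂ k 1
      have f3 := pre_anti ρ₁ k (by omega : 1 ≤ q-m)
      have f4 := pre_anti ρ₂ k (by omega : 1 ≤ q-m)
      have f5 := pre_le_tot ρ₁ k (q-m)
      have f6 := pre_le_tot ρ₂ k (q-m)
      rcases le_or_gt (q-m) m with htm | htm
      · have g3 := tot_le ρ₁ (by omega : 1 ≤ q-m) htm
        have g4 := tot_le ρ₂ (by omega : 1 ≤ q-m) htm
        omega
      · have g3 := tot_zero ρ₁ htm
        have g4 := tot_zero ρ₂ htm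
        omega

end BCR

namespace BCR
variable {m : ℕ}

def countGe (t : ℕ) (l : List ℕ) : ℕ := l.countP (fun x => decide (t ≤ x))

lemma countGe_mono_of_forall₂ {l₁ l₂ : List ℕ} (h : List.Forall₂ (· ≤ ·) l₁ l₂) (t : ℕ) :
    countGe t l₁ ≤ countGe t l₂ := by
  induction h with
  | nil => exact le_refl _
  | @cons a b l₁' l₂' hab _ ih =>
    rw [countGe, countGe, List.countP_cons, List.countP_cons]
    have : (if decide (t ≤ a) = true then 1 else 0) ≤ if decide (t ≤ b) = true then 1 else 0 := by
      split_ifs with h1 h2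
      · omega
      · simp at h1 h2; omega
      · omega
      · omega
    have ih' : countGe t l₁' ≤ countGe t l₂' := ih
    rw [countGe, countGe] at ih'
    omega

lemma forall₂_of_countGe {l₁ l₂ : List ℕ} (h₁ : List.Pairwise (· ≥ ·) l₁)
    (h₂ : List.Pairwise (· ≥ ·) l₂) (hlen : l₁.length = l₂.length)
    (hcnt : ∀ t, 1 ≤ t → countGe t l₁ ≤ countGe t l₂) :
    List.Forall₂ (· ≤ ·) l₁ l₂ := by
  induction l₁ generalizing l₂ with
  | nil =>
    cases l₂ with
    | nil => exact List.Forall₂.nil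
    | cons b l₂' => simp at hlen
  | cons a l₁' ih =>
    cases l₂ with
    | nil => simp at hlen
    | cons b l₂' =>
      have hab : a ≤ b := by
        rcases Nat.eq_zero_or_pos a with ha | ha
        · omega
        · have h1 : 0 < countGe a (a :: l₁') := by
            rw [countGe, List.countP_pos_iff]
            exact ⟨a, List.mem_cons_self (a := a) (l := l₁'), by simp⟩
          have h2 : 0 < countGe a (b :: l₂') := lt_of_lt_of_le h1 (hcnt a ha)
          rw [countGe, List.countP_pos_iff] at h2
          obtain ⟨x, hx, hx2⟩ := h2
          simp only [decide_eq_true_eq] at hx2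
          rcases List.mem_cons.mp hx with rfl | hx
          · exact hx2
          · exact le_trans hx2 (List.rel_of_pairwise_cons h₂ hx)
      refine List.forall₂_cons.mpr ⟨hab, ?_⟩
      apply ih (List.pairwise_cons.mp h₁).2 (List.pairwise_cons.mp h₂).2 (by simpa using hlen)
      intro t ht
      have hc := hcnt t ht
      rw [countGe, countGe, List.countP_cons, List.countP_cons] at hc
      rcases le_or_gt t a with hta | hta
      · have e1 : decide (t ≤ a) = true := by simp; omega
        have e2 : decide (t ≤ b) = true := by simp; omega
        rw [e1, e2] at hc
        simp only [if_pos] at hc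
        rw [countGe, countGe]
        omega
      · have e0 : List.countP (fun x => decide (t ≤ x)) l₁' = 0 := by
          rw [List.countP_eq_zero]
          intro x hx
          have := List.rel_of_pairwise_cons h₁ hx
          simp only [decide_eq_true_eq]
          omega
        simp only [countGe]
        omega

lemma pre_succ (σ : Rook m) (k t : ℕ) :
    pre σ (k+1) t = pre σ k t +
      (if h : k < m then (if t ≤ σ.1 ⟨k, h⟩ then 1 else 0) else 0) := by
  split_ifs with h1 h2
  · rw [pre, pre]
    have : Finset.univ.filter (fun j : Fin m => j.val < k + 1 ∧ t ≤ σ.1 j)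
        = insert ⟨k, h1⟩ (Finset.univ.filter (fun j : Fin m => j.val < k ∧ t ≤ σ.1 j)) := by
      ext j
      simp only [Finset.mem_filter, Finset.mem_univ, true_and, Finset.mem_insert]
      constructor
      · rintro ⟨hj1, hj2⟩
        rcases Nat.lt_succ_iff_lt_or_eq.mp hj1 with hj | hj
        · exact Or.inr ⟨hj, hj2⟩
        · exact Or.inl (Fin.ext hj)
      · rintro (rfl | ⟨hj1, hj2⟩)
        · exact ⟨by simp, h2⟩
        · exact ⟨by omega, hj2⟩
    rw [this, Finset.card_insert_of_notMem (by
      rw [Finset.mem_filter]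
      rintro ⟨-, hj, -⟩
      simp at hj)]
  · rw [pre, pre]
    have : Finset.univ.filter (fun j : Fin m => j.val < k + 1 ∧ t ≤ σ.1 j)
        = Finset.univ.filter (fun j : Fin m => j.val < k ∧ t ≤ σ.1 j) := by
      apply Finset.filter_congr
      intro j _
      constructor
      · rintro ⟨hj1, hj2⟩
        refine ⟨?_, hj2⟩
        rcases Nat.lt_succ_iff_lt_or_eq.mp hj1 with hj | hj
        · exact hj
        · exfalso
          apply h2
          have hje : j = ⟨k, h1⟩ := Fin.ext hj
          rwa [hje] at hj2
      · rintro ⟨hj1, hj2⟩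
        exact ⟨by omega, hj2⟩
    rw [this]
    omega
  · rw [pre, pre]
    have : Finset.univ.filter (fun j : Fin m => j.val < k + 1 ∧ t ≤ σ.1 j)
        = Finset.univ.filter (fun j : Fin m => j.val < k ∧ t ≤ σ.1 j) := by
      apply Finset.filter_congr
      intro j _
      have := j.isLt
      constructor
      · rintro ⟨hj1, hj2⟩
        exact ⟨by omega, hj2⟩
      · rintro ⟨hj1, hj2⟩
        exact ⟨by omega, hj2⟩
    rw [this]
    omega

lemma countGe_append (t : ℕ) (l₁ l₂ : List ℕ) :
    countGe t (l₁ ++ l₂) = countGe t l₁ + countGe t l₂ := List.countP_append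

lemma countGe_singleton (t x : ℕ) : countGe t [x] = if t ≤ x then 1 else 0 := by
  simp [countGe, List.countP_singleton]

lemma countGe_take (σ : Rook m) (k t : ℕ) :
    countGe t ((List.ofFn σ.1).take k) = pre σ k t := by
  induction k with
  | zero =>
    rw [List.take_zero, pre]
    have : Finset.univ.filter (fun j : Fin m => j.val < 0 ∧ t ≤ σ.1 j) = ∅ := by
      rw [Finset.filter_eq_empty_iff]
      rintro j - ⟨hj, -⟩
      omega
    rw [this]
    rfl
  | succ k ih =>
    rw [List.take_succ, countGe_append, ih, pre_succ]
    congr 1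
    rcases lt_or_ge k m with hk | hk
    · have he : (List.ofFn σ.1)[k]? = some (σ.1 ⟨k, hk⟩) := by
        rw [List.getElem?_eq_some_iff]
        refine ⟨by rw [List.length_ofFn]; exact hk, ?_⟩
        rw [List.getElem_ofFn]
      rw [he, Option.toList_some, countGe_singleton, dif_pos hk]
    · have he : (List.ofFn σ.1)[k]? = none := by
        rw [List.getElem?_eq_none_iff, List.length_ofFn]
        exact hk
      rw [he, dif_neg (by omega)]
      rfl

lemma countGe_prefSort (σ : Rook m) (k t : ℕ) :
    countGe t (prefSort σ.1 k) = pre σ k t :=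
  calc countGe t (prefSort σ.1 k) = countGe t ((List.ofFn σ.1).take k) :=
      List.Perm.countP_eq _ (List.perm_insertionSort (· ≥ ·) ((List.ofFn σ.1).take k))
    _ = pre σ k t := countGe_take σ k t

lemma rookLE_iff_pre (σ τ : Rook m) :
    rookLE σ τ ↔ ∀ k t, 1 ≤ t → pre σ k t ≤ pre τ k t := by
  constructor
  · intro h k t ht
    rw [← countGe_prefSort σ k t, ← countGe_prefSort τ k t]
    exact countGe_mono_of_forall₂ (h k) t
  · intro h k
    apply forall₂_of_countGe (List.pairwise_insertionSort _ _) (List.pairwise_insertionSort _ _)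
    · show (prefSort σ.1 k).length = (prefSort τ.1 k).length
      rw [prefSort, prefSort, List.length_insertionSort, List.length_insertionSort,
        List.length_take, List.length_take, List.length_ofFn, List.length_ofFn]
    · intro t ht
      show countGe t (prefSort σ.1 k) ≤ countGe t (prefSort τ.1 k)
      rw [countGe_prefSort, countGe_prefSort]
      exact h k t ht

end BCR

namespace BCR
variable {m : ℕ}

/-- reversal of the domain of a rook element -/
def revRook (σ : Rook m) : Rook m :=
  ⟨fun j => σ.1 ⟨m - 1 - j.val, by have := j.isLt; omega⟩, by
    constructor
    · intro j
      exact σ.2.1 _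
    · intro i j hi heq
      have := σ.2.2 _ _ hi heq
      rw [Fin.mk.injEq] at this
      have h1 := i.isLt
      have h2 := j.isLt
      exact Fin.ext (by omega)⟩

lemma revRook_apply (σ : Rook m) (j : Fin m) :
    (revRook σ).1 j = σ.1 ⟨m - 1 - j.val, by have := j.isLt; omega⟩ := rfl

lemma revRook_revRook (σ : Rook m) : revRook (revRook σ) = σ := by
  apply Subtype.ext
  funext j
  rw [revRook_apply, revRook_apply]
  have hval := j.isLt
  exact congrArg σ.1 (Fin.ext (show m - 1 - (m - 1 - j.val) = j.val by omega))

lemma pre_eq_suf_rev (σ : Rook m) {k : ℕ} (hk : k ≤ m) (t : ℕ) :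
    pre σ k t = suf (revRook σ) (m - k) t := by
  rw [pre, suf]
  apply Finset.card_bij (fun j _ => (⟨m - 1 - j.val, by have := j.isLt; omega⟩ : Fin m))
  · intro j hj
    rw [Finset.mem_filter] at hj ⊢
    obtain ⟨-, hj1, hj2⟩ := hj
    have := j.isLt
    refine ⟨Finset.mem_univ _, by show m - k ≤ m - 1 - j.val; omega, ?_⟩
    rw [revRook_apply]
    have he : (⟨m - 1 - (m - 1 - j.val), by omega⟩ : Fin m) = j :=
      Fin.ext (by show m - 1 - (m - 1 - j.val) = j.val; omega)
    rw [he]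
    exact hj2
  · intro j hj j' hj' h
    rw [Finset.mem_filter] at hj hj'
    rw [Fin.mk.injEq] at h
    have := j.isLt
    have := j'.isLt
    exact Fin.ext (by omega)
  · intro j' hj'
    rw [Finset.mem_filter] at hj'
    obtain ⟨-, hj1, hj2⟩ := hj'
    have hlt := j'.isLt
    refine ⟨⟨m - 1 - j'.val, by omega⟩, ?_, ?_⟩
    · rw [Finset.mem_filter]
      refine ⟨Finset.mem_univ _, by show m - 1 - j'.val < k; omega, ?_⟩
      rw [revRook_apply] at hj2
      have he : (⟨m - 1 - j'.val, by omega⟩ : Fin m)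
          = ⟨m - 1 - j'.val, by have := j'.isLt; omega⟩ := rfl
      rw [he]
      exact hj2
    · exact Fin.ext (by show m - 1 - (m - 1 - j'.val) = j'.val; omega)

lemma pre_sat (σ : Rook m) {k : ℕ} (hk : m ≤ k) (t : ℕ) : pre σ k t = pre σ m t := by
  rw [pre, pre]
  congr 1
  apply Finset.filter_congr
  intro j _
  have := j.isLt
  constructor
  · rintro ⟨-, h2⟩
    exact ⟨by omega, h2⟩
  · rintro ⟨-, h2⟩
    exact ⟨by omega, h2⟩

lemma pre_iff_suf_rev (σ τ : Rook m) :
    (∀ k t, 1 ≤ t → pre σ k t ≤ pre τ k t)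
      ↔ (∀ k t, k ≤ m → 1 ≤ t → suf (revRook σ) k t ≤ suf (revRook τ) k t) := by
  constructor
  · intro h k t hk ht
    have e1 : pre σ (m - k) t = suf (revRook σ) k t := by
      rw [pre_eq_suf_rev σ (by omega : m - k ≤ m) t]
      congr 1
      omega
    have e2 : pre τ (m - k) t = suf (revRook τ) k t := by
      rw [pre_eq_suf_rev τ (by omega : m - k ≤ m) t]
      congr 1
      omega
    rw [← e1, ← e2]
    exact h (m - k) t ht
  · intro h k t ht
    rcases le_or_gt k m with hk | hk
    · rw [pre_eq_suf_rev σ hk t, pre_eq_suf_rev τ hk t]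
      exact h (m - k) t (by omega) ht
    · rw [pre_sat σ (by omega) t, pre_sat τ (by omega) t,
        pre_eq_suf_rev σ (le_refl m) t, pre_eq_suf_rev τ (le_refl m) t]
      exact h (m - m) t (by omega) ht

end BCR


/-- For `W = S_{2m+1}` and `I = {s_1,…,s_m}`, the poset of `(W_I, W_I)`-double cosets of
`W` (ordered by Bruhat order on maximal representatives), with the order reversed, is
isomorphic to the rook monoid `R_m` with the Bruhat–Chevalley–Renner order: there is a
system of representatives `g : R_m → W` of the double cosets such that
`σ ≤ τ` in `R_m` iff `[g τ] ≤ [g σ]` as double cosets. -/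
theorem double_cosets_opposite_iso_rook_monoid (m : ℕ) :
    ∃ g : Rook m → Equiv.Perm (Fin (2 * m + 1)),
      (∀ w : Equiv.Perm (Fin (2 * m + 1)), ∃! σ : Rook m, dcRel m w (g σ)) ∧
      (∀ σ τ : Rook m, rookLE σ τ ↔ dcLE m (g τ) (g σ)) := by
  refine ⟨fun σ => BCR.gperm (BCR.revRook σ), ?_, ?_⟩
  · intro w
    obtain ⟨σ₀, h1, h2⟩ := BCR.coset_exists_unique w
    refine ⟨BCR.revRook σ₀, ?_, ?_⟩
    · show dcRel m w (BCR.gperm (BCR.revRook (BCR.revRook σ₀)))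
      rw [BCR.revRook_revRook]
      exact h1
    · intro σ' h'
      have := h2 (BCR.revRook σ') h'
      have := congrArg BCR.revRook this
      rwa [BCR.revRook_revRook] at this
  · intro σ τ
    rw [BCR.dcLE_gperm_iff (BCR.revRook σ) (BCR.revRook τ)]
    rw [BCR.bruhatLE_iff_rnk]
    rw [BCR.rnk_suf_iff (BCR.revRook τ) (BCR.revRook σ)]
    rw [BCR.rookLE_iff_pre σ τ, BCR.pre_iff_suf_rev σ τ]
end
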